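/- arXiv:2202.02286 — 5 statements merged into one kernel-verified Lean document; each statement's English description precedes it below -/
import Mathlib

section
/- For ρ ≥ 1 and p ∈ R^d, the Fourier multiplier λ_ρ(p) = (1/((2ρ+1)^d − 1)) Σ_{0<|y|_∞≤ρ} (1 − cos(p·y)) satisfies the product formula λ_ρ(p) = ((2ρ+1)^d/((2ρ+1)^d − 1)) (1 − Π_{i=1}^d sin((2ρ+1)p_i/2) / ((2ρ+1) sin(p_i/2))). -/
/-!
Adding the origin to `J_ρ` gives the box `[-ρ, ρ]^d`, over which `Σ_y e^{i p·y}` factorises as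
`Π_i Σ_{a=-ρ}^{ρ} e^{i a p_i}`. Each factor is a Dirichlet kernel
`sin((2ρ+1) p_i / 2) / sin(p_i / 2)`, proved by induction on `ρ` after multiplying by
`sin(p_i / 2)`. Taking real parts, `Σ_{y ∈ J_ρ} (1 - cos(p·y)) = (2ρ+1)^d - Π_i (…)`, and the
product formula is this identity divided by `(2ρ+1)^d - 1`.
-/

/-- The standard range-`ρ` step distribution `J_ρ = {x ∈ ℤ^d \ {0} : |x|_∞ ≤ ρ}`. -/
noncomputable def Jrho (d ρ : ℕ) : Finset (Fin d → ℤ) :=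
  (Fintype.piFinset fun _ : Fin d => Finset.Icc (-(ρ : ℤ)) (ρ : ℤ)).erase 0

open Finset Complex

lemma Int.Icc_neg_succ_succ (n : ℕ) :
    Icc (-(n + 1 : ℤ)) (n + 1) = insert (-(n + 1 : ℤ)) (insert (n + 1 : ℤ) (Icc (-n : ℤ) n)) := by
  ext a
  simp only [mem_Icc, mem_insert]
  omega

lemma Complex.sum_Icc_exp_mul_I_mul_sin_half (x : ℂ) (n : ℕ) :
    (∑ a ∈ Icc (-(n : ℤ)) n, exp (a * x * I)) * sin (x / 2) = sin ((2 * n + 1) * x / 2) := by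
  induction n with
  | zero => simp
  | succ n ih =>
    have hnotin : (-(n + 1 : ℤ)) ∉ insert (n + 1 : ℤ) (Icc (-n : ℤ) n) := by
      simp only [mem_insert, mem_Icc]
      omega
    have hnotin' : (n + 1 : ℤ) ∉ Icc (-n : ℤ) n := by simp
    have hpair : exp (((-(n + 1) : ℤ) : ℂ) * x * I) + exp (((n + 1 : ℤ) : ℂ) * x * I)
        = 2 * cos ((n + 1) * x) := by
      rw [two_cos]
      push_cast
      ring_nf
    have hstep : sin ((2 * (n + 1) + 1) * x / 2) - sin ((2 * n + 1) * x / 2)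
        = 2 * sin (x / 2) * cos ((n + 1) * x) := by
      rw [sin_sub_sin]
      ring_nf
    push_cast
    rw [Int.Icc_neg_succ_succ, sum_insert hnotin, sum_insert hnotin', ← add_assoc, add_mul,
      hpair, ih]
    linear_combination -hstep

lemma Complex.sum_Icc_exp_mul_I_eq_sin_div_sin (x : ℝ) (n : ℕ) (hx : Real.sin (x / 2) ≠ 0) :
    ∑ a ∈ Icc (-(n : ℤ)) n, exp (a * x * I)
      = ((Real.sin ((2 * n + 1) * x / 2) / Real.sin (x / 2) : ℝ) : ℂ) := by
  have hx' : sin (x / 2) ≠ 0 := by exact_mod_cast hx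
  push_cast
  rw [eq_div_iff hx', sum_Icc_exp_mul_I_mul_sin_half]

lemma sum_piFinset_cos_sum_mul {ι : Type*} [Fintype ι] [DecidableEq ι] (s : Finset ℤ)
    (p : ι → ℝ) :
    ∑ y ∈ Fintype.piFinset (fun _ : ι => s), Real.cos (∑ i, p i * y i)
      = (∏ i, ∑ a ∈ s, exp (a * p i * I)).re := by
  rw [← sum_prod_piFinset, re_sum]
  refine sum_congr rfl fun y _ => ?_
  rw [← exp_sum, ← exp_ofReal_mul_I_re]
  push_cast
  rw [sum_mul]
  simp only [mul_comm]

lemma card_piFinset_Icc_neg (d ρ : ℕ) :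
    #(Fintype.piFinset fun _ : Fin d => Icc (-(ρ : ℤ)) ρ) = (2 * ρ + 1) ^ d := by
  rw [Fintype.card_piFinset_const, Int.card_Icc]
  congr
  omega

lemma sum_Jrho_one_sub_cos (d ρ : ℕ) (p : Fin d → ℝ) (hp : ∀ i, Real.sin (p i / 2) ≠ 0) :
    ∑ y ∈ Jrho d ρ, (1 - Real.cos (∑ i, p i * y i))
      = (2 * ρ + 1) ^ d - ∏ i, Real.sin ((2 * ρ + 1) * p i / 2) / Real.sin (p i / 2) := by
  have hzero : (0 : Fin d → ℤ) ∈ Fintype.piFinset fun _ : Fin d => Icc (-(ρ : ℤ)) ρ := by simp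
  rw [Jrho, sum_erase_eq_sub hzero, sum_sub_distrib, sum_const, card_piFinset_Icc_neg,
    sum_piFinset_cos_sum_mul, prod_congr rfl fun i _ => sum_Icc_exp_mul_I_eq_sin_div_sin _ ρ (hp i),
    ← ofReal_prod, ofReal_re]
  simp

theorem stmt4_general (d ρ : ℕ) (p : Fin d → ℝ)
    (hp : ∀ i, Real.sin (p i / 2) ≠ 0) :
    1 / ((2 * (ρ : ℝ) + 1) ^ d - 1) *
        ∑ y ∈ Jrho d ρ, (1 - Real.cos (∑ i, p i * (y i : ℝ)))
      = (2 * (ρ : ℝ) + 1) ^ d / ((2 * (ρ : ℝ) + 1) ^ d - 1) *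
          (1 - ∏ i, Real.sin ((2 * (ρ : ℝ) + 1) * p i / 2) /
            ((2 * (ρ : ℝ) + 1) * Real.sin (p i / 2))) := by
  have hprod : ∏ i, Real.sin ((2 * (ρ : ℝ) + 1) * p i / 2) / ((2 * ρ + 1) * Real.sin (p i / 2))
      = (∏ i, Real.sin ((2 * ρ + 1) * p i / 2) / Real.sin (p i / 2)) / (2 * ρ + 1) ^ d := by
    simp_rw [mul_comm (2 * (ρ : ℝ) + 1) (Real.sin _), ← div_div, prod_div_distrib, prod_const,
      card_univ, Fintype.card_fin]
  have hN : (2 * (ρ : ℝ) + 1) ^ d ≠ 0 := by positivity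
  rw [sum_Jrho_one_sub_cos d ρ p hp, hprod]
  field_simp

theorem stmt4 (d ρ : ℕ) (hρ : 1 ≤ ρ) (p : Fin d → ℝ)
    (hp : ∀ i, Real.sin (p i / 2) ≠ 0) :
    1 / ((2 * (ρ : ℝ) + 1) ^ d - 1) *
        ∑ y ∈ Jrho d ρ, (1 - Real.cos (∑ i, p i * (y i : ℝ)))
      = (2 * (ρ : ℝ) + 1) ^ d / ((2 * (ρ : ℝ) + 1) ^ d - 1) *
          (1 - ∏ i, Real.sin ((2 * (ρ : ℝ) + 1) * p i / 2) /
            ((2 * (ρ : ℝ) + 1) * Real.sin (p i / 2))) :=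
  stmt4_general d ρ p hp
end

section
/- Discrete trace inequality: let B = {1,…,R}² ⊂ Z² be a square of side R and l_1 = {0}×[1,R] its left outer boundary line. Then for every function u : Z² → R, R^{−1} Σ_{x∈l_1} u(x)² ≤ R^{−2} Σ_{x∈B} ( u(x)² + R |∇^{−e_1}(u²)(x)| ), where ∇^{μ}f(x) = f(x+μ) − f(x). -/
lemma tele12 (v : ℕ → ℝ) (n : ℕ) :
    v 0 ≤ v n + ∑ k ∈ Finset.range n, |v k - v (k + 1)| := by
  have h := Finset.sum_range_sub' v n
  have h2 : v 0 - v n ≤ ∑ k ∈ Finset.range n, |v k - v (k + 1)| := by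
    rw [← h]
    exact (le_abs_self _).trans (Finset.abs_sum_le_sum_abs _ _)
  linarith

theorem stmt12 (R : ℕ) (hR : 1 ≤ R) (u : ℤ × ℤ → ℝ) :
    (R : ℝ)⁻¹ * ∑ x ∈ ({(0 : ℤ)} : Finset ℤ) ×ˢ Finset.Icc (1 : ℤ) (R : ℤ), u x ^ 2 ≤
      ((R : ℝ) ^ 2)⁻¹ * ∑ x ∈ Finset.Icc (1 : ℤ) (R : ℤ) ×ˢ Finset.Icc (1 : ℤ) (R : ℤ),
        (u x ^ 2 + (R : ℝ) * |u (x.1 - 1, x.2) ^ 2 - u x ^ 2|) := by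
  have hRpos : (0 : ℝ) < R := by positivity
  have hIcc : Finset.Icc (1 : ℤ) (R : ℤ) =
      Finset.map ⟨fun n : ℕ => (n : ℤ) + 1, fun a b h => by simpa using h⟩ (Finset.range R) := by
    ext x
    simp only [Finset.mem_Icc, Finset.mem_map, Finset.mem_range, Function.Embedding.coeFn_mk]
    show _ ↔ ∃ a, a < R ∧ (a : ℤ) + 1 = x
    constructor
    · intro hx; exact ⟨(x - 1).toNat, by omega, by omega⟩
    · rintro ⟨n, hn, rfl⟩; omega
  have hcardn : (Finset.Icc (1 : ℤ) (R : ℤ)).card = R := by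
    rw [Int.card_Icc]; omega
  have hcard : ((Finset.Icc (1 : ℤ) (R : ℤ)).card : ℝ) = (R : ℝ) := by
    rw [hcardn]
  -- per-row inequality
  have key : ∀ b : ℤ, (R : ℝ) * u (0, b) ^ 2 ≤
      ∑ a ∈ Finset.Icc (1 : ℤ) (R : ℤ),
        (u (a, b) ^ 2 + (R : ℝ) * |u (a - 1, b) ^ 2 - u (a, b) ^ 2|) := by
    intro b
    set D := ∑ k ∈ Finset.Icc (1 : ℤ) (R : ℤ), |u (k - 1, b) ^ 2 - u (k, b) ^ 2| with hDdef
    have hD : D = ∑ j ∈ Finset.range R, |u ((j : ℤ), b) ^ 2 - u ((j : ℤ) + 1, b) ^ 2| := by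
      rw [hDdef, hIcc, Finset.sum_map]
      refine Finset.sum_congr rfl fun j _ => ?_
      show |u ((j : ℤ) + 1 - 1, b) ^ 2 - u ((j : ℤ) + 1, b) ^ 2| = _
      simp
    have h1 : ∀ a ∈ Finset.Icc (1 : ℤ) (R : ℤ), u (0, b) ^ 2 ≤ u (a, b) ^ 2 + D := by
      intro a ha
      simp only [Finset.mem_Icc] at ha
      have ht := tele12 (fun n : ℕ => u ((n : ℤ), b) ^ 2) a.toNat
      have ha' : ((a.toNat : ℤ)) = a := by omega
      simp only [ha', Nat.cast_zero] at ht
      refine ht.trans ?_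
      gcongr
      rw [hD]
      refine Finset.sum_le_sum_of_subset_of_nonneg
        (Finset.range_subset_range.mpr (by omega)) (fun _ _ _ => abs_nonneg _)
    have hsum : (R : ℝ) * u (0, b) ^ 2 ≤
        ∑ a ∈ Finset.Icc (1 : ℤ) (R : ℤ), (u (a, b) ^ 2 + D) := by
      calc (R : ℝ) * u (0, b) ^ 2
          = ∑ _a ∈ Finset.Icc (1 : ℤ) (R : ℤ), u (0, b) ^ 2 := by
            rw [Finset.sum_const, nsmul_eq_mul, hcard]
        _ ≤ _ := Finset.sum_le_sum h1
    refine hsum.trans (le_of_eq ?_)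
    rw [Finset.sum_add_distrib, Finset.sum_add_distrib, Finset.sum_const, nsmul_eq_mul,
      hcard, ← Finset.mul_sum, hDdef]
  -- assemble
  have hmain : (R : ℝ) * ∑ x ∈ ({(0 : ℤ)} : Finset ℤ) ×ˢ Finset.Icc (1 : ℤ) (R : ℤ), u x ^ 2 ≤
      ∑ x ∈ Finset.Icc (1 : ℤ) (R : ℤ) ×ˢ Finset.Icc (1 : ℤ) (R : ℤ),
        (u x ^ 2 + (R : ℝ) * |u (x.1 - 1, x.2) ^ 2 - u x ^ 2|) := by
    rw [Finset.sum_product, Finset.sum_singleton, Finset.mul_sum]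
    rw [Finset.sum_product_right]
    exact Finset.sum_le_sum fun b _ => key b
  have h2 : (R : ℝ)⁻¹ * ∑ x ∈ ({(0 : ℤ)} : Finset ℤ) ×ˢ Finset.Icc (1 : ℤ) (R : ℤ), u x ^ 2 =
      ((R : ℝ) ^ 2)⁻¹ * ((R : ℝ) * ∑ x ∈ ({(0 : ℤ)} : Finset ℤ) ×ˢ Finset.Icc (1 : ℤ) (R : ℤ), u x ^ 2) := by
    field_simp
  rw [h2]
  exact mul_le_mul_of_nonneg_left hmain (by positivity)
end

section
/- Discrete Sobolev inequality in two dimensions: there exists a constant C > 0, independent of R, such that for every square B ⊂ Z² of side length R and every function f defined on the 2-neighbourhood of B, ‖f‖²_{L^∞(B)} ≤ C Σ_{a=0}^{2} R^{2a−2} ‖∇^a f‖²_{L²(B)}, where ∇^a f denotes the vector of all a-fold discrete forward/backward derivatives and ‖∇^a f‖²_{L²(B)} = Σ_{x∈B} |∇^a f(x)|² (with |·| the maximum over components). -/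
/-- The four unit directions `±e₁, ±e₂` in `ℤ²`. -/
def dirs : Finset (ℤ × ℤ) := {(1, 0), (-1, 0), (0, 1), (0, -1)}

/-- The discrete derivative `∇^μ f (x) = f (x + μ) - f x`. -/
def dgrad (μ : ℤ × ℤ) (f : ℤ × ℤ → ℝ) (x : ℤ × ℤ) : ℝ := f (x + μ) - f x

/-- `|∇^a f (x)|`: the maximum over all `a`-fold discrete derivatives of `f` at `x`. -/
noncomputable def dsup (a : ℕ) (f : ℤ × ℤ → ℝ) (x : ℤ × ℤ) : ℝ :=
  ⨆ μ : Fin a → dirs, |(List.ofFn fun i => ((μ i : ℤ × ℤ))).foldr dgrad f x|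

lemma tele (g : ℤ → ℝ) (m : ℤ) : ∀ n, m ≤ n →
    g n - g m = ∑ t ∈ Finset.Ico m n, (g (t+1) - g t) := by
  refine Int.le_induction ?_ ?_
  · simp
  · intro n hn ih
    have hins : Finset.Ico m (n+1) = insert n (Finset.Ico m n) := by
      ext t; simp [Finset.mem_Ico]; omega
    rw [hins, Finset.sum_insert (by simp), ← ih]; ring

lemma abs_sub_le_sum (g : ℤ → ℝ) (a₀ N : ℤ) {x y : ℤ}
    (hx : x ∈ Finset.Icc a₀ N) (hy : y ∈ Finset.Icc a₀ N) :
    |g x - g y| ≤ ∑ t ∈ Finset.Icc a₀ N, |g (t+1) - g t| := by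
  simp only [Finset.mem_Icc] at hx hy
  wlog hxy : x ≤ y generalizing x y
  · rw [abs_sub_comm]; exact this hy hx (le_of_not_ge hxy)
  rw [abs_sub_comm, tele g x y hxy]
  calc |∑ t ∈ Finset.Ico x y, (g (t+1) - g t)| ≤ ∑ t ∈ Finset.Ico x y, |g (t+1) - g t| :=
        Finset.abs_sum_le_sum_abs _ _
    _ ≤ ∑ t ∈ Finset.Icc a₀ N, |g (t+1) - g t| := by
        apply Finset.sum_le_sum_of_subset_of_nonneg
        · intro t ht
          simp only [Finset.mem_Ico] at ht
          simp only [Finset.mem_Icc]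
          exact ⟨hx.1.trans ht.1, le_trans (by omega) hy.2⟩
        · intro t _ _; exact abs_nonneg _

lemma oneD (g : ℤ → ℝ) (a₀ : ℤ) (R : ℕ) (hR : 1 ≤ R) {x : ℤ}
    (hx : x ∈ Finset.Icc a₀ (a₀ + (R : ℤ) - 1)) :
    g x ^ 2 ≤ (2 / R) * ∑ y ∈ Finset.Icc a₀ (a₀ + (R : ℤ) - 1), g y ^ 2
      + 2 * R * ∑ t ∈ Finset.Icc a₀ (a₀ + (R : ℤ) - 1), (g (t+1) - g t) ^ 2 := by
  set I := Finset.Icc a₀ (a₀ + (R : ℤ) - 1) with hI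
  have hcard : (I.card : ℝ) = R := by
    rw [hI, Int.card_Icc]
    have : (a₀ + (R:ℤ) - 1 + 1 - a₀) = (R:ℤ) := by ring
    rw [this]; simp
  have hRpos : (0:ℝ) < R := by exact_mod_cast hR
  have hS : (∑ t ∈ I, |g (t+1) - g t|) ^ 2 ≤ R * ∑ t ∈ I, (g (t+1) - g t) ^ 2 := by
    have := Finset.sum_mul_sq_le_sq_mul_sq I (fun _ => (1:ℝ)) (fun t => |g (t+1) - g t|)
    simp only [one_mul, one_pow, sq_abs, Finset.sum_const, nsmul_eq_mul, mul_one] at this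
    calc (∑ t ∈ I, |g (t+1) - g t|) ^ 2 ≤ (I.card : ℝ) * ∑ t ∈ I, (g (t+1) - g t) ^ 2 := this
      _ = R * ∑ t ∈ I, (g (t+1) - g t) ^ 2 := by rw [hcard]
  have key : ∀ y ∈ I, g x ^ 2 ≤ 2 * g y ^ 2 + 2 * R * ∑ t ∈ I, (g (t+1) - g t) ^ 2 := by
    intro y hy
    have h1 : |g x - g y| ≤ ∑ t ∈ I, |g (t+1) - g t| := abs_sub_le_sum g _ _ hx hy
    have h2 : (g x - g y) ^ 2 ≤ R * ∑ t ∈ I, (g (t+1) - g t) ^ 2 := by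
      calc (g x - g y) ^ 2 = |g x - g y| ^ 2 := (sq_abs _).symm
        _ ≤ (∑ t ∈ I, |g (t+1) - g t|) ^ 2 := by
            apply pow_le_pow_left₀ (abs_nonneg _) h1
        _ ≤ R * ∑ t ∈ I, (g (t+1) - g t) ^ 2 := hS
    nlinarith [sq_nonneg (g x - 2 * g y)]
  have hsum := Finset.sum_le_sum key
  rw [Finset.sum_const, nsmul_eq_mul] at hsum
  have hsum2 : (R:ℝ) * g x ^ 2 ≤ 2 * (∑ y ∈ I, g y ^ 2) + R * (2 * R * ∑ t ∈ I, (g (t+1) - g t) ^ 2) := by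
    rw [hcard] at hsum
    calc (R:ℝ) * g x ^ 2 ≤ ∑ y ∈ I, (2 * g y ^ 2 + 2 * R * ∑ t ∈ I, (g (t+1) - g t) ^ 2) := hsum
      _ = 2 * (∑ y ∈ I, g y ^ 2) + I.card * (2 * R * ∑ t ∈ I, (g (t+1) - g t) ^ 2) := by
          simp [Finset.sum_add_distrib, Finset.sum_const, nsmul_eq_mul, ← Finset.mul_sum]
      _ = 2 * (∑ y ∈ I, g y ^ 2) + R * (2 * R * ∑ t ∈ I, (g (t+1) - g t) ^ 2) := by rw [hcard]
  rw [← mul_le_mul_iff_right₀ hRpos]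
  have heq : (R:ℝ) * ((2 / R) * (∑ y ∈ I, g y ^ 2) + 2 * R * ∑ t ∈ I, (g (t+1) - g t) ^ 2)
      = 2 * (∑ y ∈ I, g y ^ 2) + R * (2 * R * ∑ t ∈ I, (g (t+1) - g t) ^ 2) := by
    field_simp
  rw [heq]
  exact hsum2

lemma comp_le (a : ℕ) (μ : Fin a → dirs) (f : ℤ × ℤ → ℝ) (x : ℤ × ℤ) :
    |(List.ofFn fun i => ((μ i : ℤ × ℤ))).foldr dgrad f x| ≤ dsup a f x := by
  unfold dsup
  exact le_ciSup (f := fun ν : Fin a → dirs => |(List.ofFn fun i => ((ν i : ℤ × ℤ))).foldr dgrad f x|)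
    (Set.Finite.bddAbove (Set.finite_range _)) μ

lemma sq_le_dsup_sq (a : ℕ) (μ : Fin a → dirs) (f : ℤ × ℤ → ℝ) (x : ℤ × ℤ) :
    ((List.ofFn fun i => ((μ i : ℤ × ℤ))).foldr dgrad f x) ^ 2 ≤ dsup a f x ^ 2 := by
  have h := comp_le a μ f x
  calc ((List.ofFn fun i => ((μ i : ℤ × ℤ))).foldr dgrad f x) ^ 2
      = |(List.ofFn fun i => ((μ i : ℤ × ℤ))).foldr dgrad f x| ^ 2 := (sq_abs _).symm
    _ ≤ dsup a f x ^ 2 := pow_le_pow_left₀ (abs_nonneg _) h 2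

lemma bnd0 (f : ℤ × ℤ → ℝ) (x : ℤ × ℤ) : f x ^ 2 ≤ dsup 0 f x ^ 2 := by
  have := sq_le_dsup_sq 0 (fun i => i.elim0) f x
  simpa using this

lemma bnd1 (μ0 : ℤ × ℤ) (h : μ0 ∈ dirs) (f : ℤ × ℤ → ℝ) (x : ℤ × ℤ) :
    dgrad μ0 f x ^ 2 ≤ dsup 1 f x ^ 2 := by
  have := sq_le_dsup_sq 1 (fun _ => ⟨μ0, h⟩) f x
  simpa [List.ofFn_succ] using this

lemma bnd2 (μ0 μ1 : ℤ × ℤ) (h0 : μ0 ∈ dirs) (h1 : μ1 ∈ dirs) (f : ℤ × ℤ → ℝ) (x : ℤ × ℤ) :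
    dgrad μ0 (dgrad μ1 f) x ^ 2 ≤ dsup 2 f x ^ 2 := by
  have := sq_le_dsup_sq 2 ![⟨μ0, h0⟩, ⟨μ1, h1⟩] f x
  simpa [List.ofFn_succ] using this

theorem stmt13 : ∃ C : ℝ, 0 < C ∧ ∀ R : ℕ, 1 ≤ R → ∀ (a₀ b₀ : ℤ) (f : ℤ × ℤ → ℝ),
    ∀ x ∈ Finset.Icc a₀ (a₀ + (R : ℤ) - 1) ×ˢ Finset.Icc b₀ (b₀ + (R : ℤ) - 1),
      f x ^ 2 ≤ C * ∑ a ∈ Finset.range 3, (R : ℝ) ^ (2 * (a : ℤ) - 2) *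
        ∑ y ∈ Finset.Icc a₀ (a₀ + (R : ℤ) - 1) ×ˢ Finset.Icc b₀ (b₀ + (R : ℤ) - 1),
          dsup a f y ^ 2 := by
  refine ⟨8, by norm_num, ?_⟩
  intro R hR a₀ b₀ f x hx
  have hRpos : (0:ℝ) < R := by exact_mod_cast hR
  set I1 := Finset.Icc a₀ (a₀ + (R:ℤ) - 1) with hI1
  set I2 := Finset.Icc b₀ (b₀ + (R:ℤ) - 1) with hI2
  rw [Finset.mem_product] at hx
  obtain ⟨hx1, hx2⟩ := hx
  set D1 : (ℤ × ℤ → ℝ) → ℤ × ℤ → ℝ := dgrad (1, 0) with hD1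
  set D2 : (ℤ × ℤ → ℝ) → ℤ × ℤ → ℝ := dgrad (0, 1) with hD2
  -- horizontal derivative rewriting
  have hd1 : ∀ (g : ℤ × ℤ → ℝ) (t u : ℤ), g (t + 1, u) - g (t, u) = D1 g (t, u) := by
    intro g t u; simp [hD1, dgrad, Prod.ext_iff]
  have hd2 : ∀ (g : ℤ × ℤ → ℝ) (t u : ℤ), g (t, u + 1) - g (t, u) = D2 g (t, u) := by
    intro g t u; simp [hD2, dgrad, Prod.ext_iff]
  -- step A : direction 1
  have stepA : f x ^ 2 ≤ (2 / R) * ∑ y1 ∈ I1, f (y1, x.2) ^ 2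
      + 2 * R * ∑ t ∈ I1, D1 f (t, x.2) ^ 2 := by
    have := oneD (fun t => f (t, x.2)) a₀ R hR hx1
    simpa [hd1 f] using this
  -- step B : direction 2, applied to f and D1 f
  have stepB1 : ∀ y1, f (y1, x.2) ^ 2 ≤ (2 / R) * ∑ y2 ∈ I2, f (y1, y2) ^ 2
      + 2 * R * ∑ y2 ∈ I2, D2 f (y1, y2) ^ 2 := by
    intro y1
    have := oneD (fun t => f (y1, t)) b₀ R hR hx2
    simpa [hd2 f] using this
  have stepB2 : ∀ y1, D1 f (y1, x.2) ^ 2 ≤ (2 / R) * ∑ y2 ∈ I2, D1 f (y1, y2) ^ 2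
      + 2 * R * ∑ y2 ∈ I2, D2 (D1 f) (y1, y2) ^ 2 := by
    intro y1
    have := oneD (fun t => D1 f (y1, t)) b₀ R hR hx2
    simpa [hd2 (D1 f)] using this
  set B := I1 ×ˢ I2 with hB
  set T0 := ∑ y ∈ B, dsup 0 f y ^ 2 with hT0
  set T1 := ∑ y ∈ B, dsup 1 f y ^ 2 with hT1
  set T2 := ∑ y ∈ B, dsup 2 f y ^ 2 with hT2
  have sumsq : ∀ (g : ℤ × ℤ → ℝ), ∑ y1 ∈ I1, ∑ y2 ∈ I2, g (y1, y2) ^ 2 = ∑ y ∈ B, g y ^ 2 := by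
    intro g; rw [hB, Finset.sum_product]
  -- the four L² sums bounded by dsup sums
  have hb0 : ∑ y ∈ B, f y ^ 2 ≤ T0 := Finset.sum_le_sum fun y _ => bnd0 f y
  have hb1 : ∑ y ∈ B, D1 f y ^ 2 ≤ T1 := Finset.sum_le_sum fun y _ => bnd1 (1,0) (by decide) f y
  have hb2 : ∑ y ∈ B, D2 f y ^ 2 ≤ T1 := Finset.sum_le_sum fun y _ => bnd1 (0,1) (by decide) f y
  have hb3 : ∑ y ∈ B, D2 (D1 f) y ^ 2 ≤ T2 :=
    Finset.sum_le_sum fun y _ => bnd2 (0,1) (1,0) (by decide) (by decide) f y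
  have hT0n : 0 ≤ T0 := Finset.sum_nonneg fun y _ => sq_nonneg _
  have hT1n : 0 ≤ T1 := Finset.sum_nonneg fun y _ => sq_nonneg _
  have hT2n : 0 ≤ T2 := Finset.sum_nonneg fun y _ => sq_nonneg _
  -- combine
  have main : f x ^ 2 ≤ (4 / R ^ 2) * T0 + 8 * T1 + 4 * R ^ 2 * T2 := by
    have h1 : ∑ y1 ∈ I1, f (y1, x.2) ^ 2
        ≤ (2 / R) * (∑ y ∈ B, f y ^ 2) + 2 * R * (∑ y ∈ B, D2 f y ^ 2) := by
      calc ∑ y1 ∈ I1, f (y1, x.2) ^ 2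
          ≤ ∑ y1 ∈ I1, ((2 / R) * ∑ y2 ∈ I2, f (y1, y2) ^ 2
              + 2 * R * ∑ y2 ∈ I2, D2 f (y1, y2) ^ 2) :=
            Finset.sum_le_sum fun y1 _ => stepB1 y1
        _ = (2 / R) * (∑ y1 ∈ I1, ∑ y2 ∈ I2, f (y1, y2) ^ 2)
              + 2 * R * (∑ y1 ∈ I1, ∑ y2 ∈ I2, D2 f (y1, y2) ^ 2) := by
            rw [Finset.sum_add_distrib, ← Finset.mul_sum, ← Finset.mul_sum]
        _ = (2 / R) * (∑ y ∈ B, f y ^ 2) + 2 * R * (∑ y ∈ B, D2 f y ^ 2) := by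
            rw [sumsq f, sumsq (D2 f)]
    have h2 : ∑ t ∈ I1, D1 f (t, x.2) ^ 2
        ≤ (2 / R) * (∑ y ∈ B, D1 f y ^ 2) + 2 * R * (∑ y ∈ B, D2 (D1 f) y ^ 2) := by
      calc ∑ t ∈ I1, D1 f (t, x.2) ^ 2
          ≤ ∑ t ∈ I1, ((2 / R) * ∑ y2 ∈ I2, D1 f (t, y2) ^ 2
              + 2 * R * ∑ y2 ∈ I2, D2 (D1 f) (t, y2) ^ 2) :=
            Finset.sum_le_sum fun t _ => stepB2 t
        _ = (2 / R) * (∑ t ∈ I1, ∑ y2 ∈ I2, D1 f (t, y2) ^ 2)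
              + 2 * R * (∑ t ∈ I1, ∑ y2 ∈ I2, D2 (D1 f) (t, y2) ^ 2) := by
            rw [Finset.sum_add_distrib, ← Finset.mul_sum, ← Finset.mul_sum]
        _ = (2 / R) * (∑ y ∈ B, D1 f y ^ 2) + 2 * R * (∑ y ∈ B, D2 (D1 f) y ^ 2) := by
            rw [sumsq (D1 f), sumsq (D2 (D1 f))]
    have c1 : (0:ℝ) ≤ 2 / R := by positivity
    have c2 : (0:ℝ) ≤ 2 * R := by positivity
    calc f x ^ 2 ≤ (2 / R) * ∑ y1 ∈ I1, f (y1, x.2) ^ 2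
          + 2 * R * ∑ t ∈ I1, D1 f (t, x.2) ^ 2 := stepA
      _ ≤ (2 / R) * ((2 / R) * (∑ y ∈ B, f y ^ 2) + 2 * R * (∑ y ∈ B, D2 f y ^ 2))
          + 2 * R * ((2 / R) * (∑ y ∈ B, D1 f y ^ 2) + 2 * R * (∑ y ∈ B, D2 (D1 f) y ^ 2)) := by
            have := mul_le_mul_of_nonneg_left h1 c1
            have := mul_le_mul_of_nonneg_left h2 c2
            linarith
      _ = (4 / R ^ 2) * (∑ y ∈ B, f y ^ 2) + 4 * (∑ y ∈ B, D2 f y ^ 2)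
          + 4 * (∑ y ∈ B, D1 f y ^ 2) + 4 * R ^ 2 * (∑ y ∈ B, D2 (D1 f) y ^ 2) := by
            field_simp
            ring
      _ ≤ (4 / R ^ 2) * T0 + 4 * T1 + 4 * T1 + 4 * R ^ 2 * T2 := by
            gcongr
      _ = (4 / R ^ 2) * T0 + 8 * T1 + 4 * R ^ 2 * T2 := by ring
  -- expand the RHS of the statement
  have hexp : ∑ a ∈ Finset.range 3, (R : ℝ) ^ (2 * (a : ℤ) - 2) * ∑ y ∈ B, dsup a f y ^ 2
      = ((R:ℝ) ^ 2)⁻¹ * T0 + T1 + (R:ℝ) ^ 2 * T2 := by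
    rw [Finset.sum_range_succ, Finset.sum_range_succ, Finset.sum_range_one]
    rw [← hT0, ← hT1, ← hT2]
    norm_num [zpow_neg, zpow_ofNat]
  rw [hexp]
  have hinv : (0:ℝ) ≤ ((R:ℝ) ^ 2)⁻¹ := by positivity
  have hdiv : 4 / (R:ℝ) ^ 2 = 4 * ((R:ℝ) ^ 2)⁻¹ := by ring
  nlinarith [mul_nonneg hinv hT0n, mul_nonneg (sq_nonneg (R:ℝ)) hT2n]
end

section
/- Mass-regularised limit: let Λ be a finite set with distinguished point 0, let Δ_J be a symmetric operator on R^Λ annihilating constants with (σ, −Δ_J σ) ≥ 0, let Z_β = (2π/√β) Z, and let F : (Z_β)^Λ → R be bounded, invariant under adding constants in Z_β, with Σ_{σ ∈ Ω} e^{−(1/2)(σ,−Δ_J σ)} |F(σ)| < ∞ where Ω = {σ ∈ (Z_β)^Λ : σ_0 = 0}. Then for every m² > 0 the series Σ_{σ ∈ (Z_β)^Λ} e^{−(1/2)(σ, (−Δ_J + m²)σ)} F(σ) converges absolutely, and as m² ↓ 0 the ratio of this series to the corresponding one with F replaced by 1 converges to (Σ_{σ∈Ω} e^{−(1/2)(σ,−Δ_J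 σ)} F(σ)) / (Σ_{σ∈Ω} e^{−(1/2)(σ,−Δ_J σ)}). -/
/-!
Write each configuration as `n = n' + t` with `n' o = 0` and `t ∈ ℤ`. Since `Δ_J` kills constants
and `F` is invariant, only the mass term `e^{-(m/2)|σ|²}` depends on `t`, and completing the square
turns its sum over `t` into `e^{-(m/2)(|σ'|² - S²/N)}` times the shifted Gaussian lattice sum
`evenKernel (S/(cN)) τ`, where `S = Σ_x σ'_x`, `N = |Λ|`, `c = 2π/√β` and `τ = 2πmN/β`.
By Poisson summation `evenKernel a τ = τ^{-1/2} cosKernel a (1/τ)` with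
`cosKernel a x = Σ_k cos(2πak) e^{-πk²x}`, so `evenKernel a τ ≤ evenKernel 0 τ`, and the ratio
tends to `1` as `τ → 0` because `cosKernel a x → 1` as `x → ∞`. Dividing numerator and
denominator by `evenKernel 0 τ` therefore leaves fibre weights in `[0, 1]` tending to `1`, and
dominated convergence over `{n' | n' o = 0}` gives the limit.
-/

/-- The field `σ ∈ Z_β^Λ = ((2π/√β)ℤ)^Λ` associated to an integer-valued configuration. -/
noncomputable def dgField {Λ : Type*} (β : ℝ) (n : Λ → ℤ) : Λ → ℝ :=
  fun x => 2 * Real.pi / Real.sqrt β * (n x : ℝ)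

/-- The quadratic form `(σ, −Δ_J σ)`. -/
noncomputable def quadForm {Λ : Type*} [Fintype Λ] (ΔJ : Matrix Λ Λ ℝ) (σ : Λ → ℝ) : ℝ :=
  dotProduct σ (Matrix.mulVec (-ΔJ) σ)

open Real Filter Topology HurwitzZeta Matrix

namespace HurwitzZeta

lemma cosKernel_le_cosKernel_zero (a : UnitAddCircle) (x : ℝ) :
    cosKernel a x ≤ cosKernel 0 x := by
  rcases le_or_gt x 0 with hx | hx
  · rw [cosKernel_undef _ hx, cosKernel_undef _ hx]
  induction a using QuotientAddGroup.induction_on with | H a =>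
  have h0 := hasSum_int_evenKernel 0 hx
  rw [QuotientAddGroup.mk_zero, evenKernel_eq_cosKernel_of_zero] at h0
  refine hasSum_le (fun n => ?_) (Complex.hasSum_re (hasSum_int_cosKernel a hx)) h0
  rw [Complex.re_mul_ofReal, add_zero]
  refine mul_le_of_le_one_left (exp_pos _).le ?_
  simpa [Complex.exp_re] using cos_le_one _

lemma tendsto_cosKernel_atTop (a : UnitAddCircle) : Tendsto (cosKernel a) atTop (𝓝 1) := by
  obtain ⟨p, hp, hO⟩ := isBigO_atTop_cosKernel_sub a
  have hexp : Tendsto (fun x => exp (-p * x)) atTop (𝓝 0) :=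
    tendsto_exp_atBot.comp (tendsto_id.const_mul_atTop_of_neg (neg_lt_zero.2 hp))
  simpa using (hO.trans_tendsto hexp).add_const 1

lemma evenKernel_le_evenKernel_zero (a : UnitAddCircle) (t : ℝ) :
    evenKernel a t ≤ evenKernel 0 t := by
  rcases le_or_gt t 0 with ht | ht
  · rw [evenKernel_undef _ ht, evenKernel_undef _ ht]
  rw [evenKernel_functional_equation, evenKernel_functional_equation]
  exact mul_le_mul_of_nonneg_left (cosKernel_le_cosKernel_zero a _) (by positivity)

lemma evenKernel_pos (a : UnitAddCircle) {t : ℝ} (ht : 0 < t) : 0 < evenKernel a t := by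
  induction a using QuotientAddGroup.induction_on with | H a =>
  exact (hasSum_int_evenKernel a ht).tsum_eq ▸
    (hasSum_int_evenKernel a ht).summable.tsum_pos (fun _ => (exp_pos _).le) 0 (exp_pos _)

lemma tendsto_evenKernel_div_evenKernel_zero (a : UnitAddCircle) :
    Tendsto (fun t => evenKernel a t / evenKernel 0 t) (𝓝[>] 0) (𝓝 1) := by
  have h := ((tendsto_cosKernel_atTop a).div (tendsto_cosKernel_atTop 0) one_ne_zero).comp
    tendsto_inv_nhdsGT_zero
  rw [div_one] at h
  refine h.congr' ?_
  filter_upwards [self_mem_nhdsWithin] with t (ht : 0 < t)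
  rw [Function.comp_apply, Pi.div_apply, evenKernel_functional_equation,
    evenKernel_functional_equation, mul_div_mul_left _ _ (by positivity), one_div]

end HurwitzZeta

section Gaussian

variable {Λ : Type*} [Fintype Λ]

lemma sq_sum_div_card_le_dotProduct_self (v : Λ → ℝ) :
    (∑ x, v x) ^ 2 / Fintype.card Λ ≤ v ⬝ᵥ v := by
  refine div_le_of_le_mul₀ (by positivity) (Finset.sum_nonneg fun x _ => mul_self_nonneg _) ?_
  simpa [dotProduct, ← sq, mul_comm] using
    sq_sum_le_card_mul_sum_sq (s := Finset.univ) (f := v)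

lemma dotProduct_add_const_self [Nonempty Λ] (v : Λ → ℝ) (r : ℝ) :
    (fun x => v x + r) ⬝ᵥ (fun x => v x + r) =
      (v ⬝ᵥ v - (∑ x, v x) ^ 2 / Fintype.card Λ) +
        Fintype.card Λ * (r + (∑ x, v x) / Fintype.card Λ) ^ 2 := by
  have hN : (Fintype.card Λ : ℝ) ≠ 0 := by positivity
  simp only [dotProduct, add_mul, mul_add, Finset.sum_add_distrib, ← Finset.sum_mul,
    ← Finset.mul_sum, Finset.sum_const, Finset.card_univ, nsmul_eq_mul]
  field_simp
  ring

lemma hasSum_exp_neg_mul_dotProduct_add_const [Nonempty Λ] (v : Λ → ℝ) {c m : ℝ} (hc : c ≠ 0)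
    (hm : 0 < m) :
    HasSum (fun t : ℤ => exp (-(m / 2) * ((fun x => v x + c * t) ⬝ᵥ (fun x => v x + c * t))))
      (exp (-(m / 2) * (v ⬝ᵥ v - (∑ x, v x) ^ 2 / Fintype.card Λ)) *
        evenKernel (((∑ x, v x) / (c * Fintype.card Λ) : ℝ))
          (m * (Fintype.card Λ : ℝ) * c ^ 2 / (2 * π))) := by
  refine ((hasSum_int_evenKernel _ (by positivity)).mul_left _).congr_fun fun t => ?_
  have hN : (Fintype.card Λ : ℝ) ≠ 0 := by positivity
  rw [dotProduct_add_const_self, ← exp_add]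
  congr 1
  field_simp
  ring

end Gaussian

section Lattice

variable {Λ : Type*}

def addConstEquiv (o : Λ) : {n : Λ → ℤ // n o = 0} × ℤ ≃ (Λ → ℤ) where
  toFun p x := p.1.1 x + p.2
  invFun n := (⟨fun x => n x - n o, sub_self _⟩, n o)
  left_inv := by rintro ⟨⟨n, hn⟩, t⟩; simp [hn]
  right_inv n := by funext x; simp

lemma dgField_add_const (β : ℝ) (n : Λ → ℤ) (t : ℤ) :
    dgField β (fun x => n x + t) = fun x => dgField β n x + 2 * π / √β * t := by
  funext x
  simp only [dgField, Int.cast_add]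
  ring

variable [Fintype Λ]

lemma quadForm_add_const {ΔJ : Matrix Λ Λ ℝ} (hsym : ΔJ.IsSymm)
    (hconst : ∀ t : ℝ, ΔJ *ᵥ (fun _ => t) = 0) (σ : Λ → ℝ) (r : ℝ) :
    quadForm ΔJ (fun x => σ x + r) = quadForm ΔJ σ := by
  have hr : (-ΔJ) *ᵥ (fun _ : Λ => r) = 0 := by rw [neg_mulVec, hconst, neg_zero]
  have hr' : (fun _ : Λ => r) ᵥ* (-ΔJ) = 0 := by
    rw [← mulVec_transpose, transpose_neg, hsym.eq, hr]
  change (σ + fun _ => r) ⬝ᵥ (-ΔJ) *ᵥ (σ + fun _ => r) = σ ⬝ᵥ (-ΔJ) *ᵥ σ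
  rw [mulVec_add, hr, add_zero, add_dotProduct, dotProduct_mulVec (fun _ => r), hr',
    zero_dotProduct, add_zero]

noncomputable def massWeight (β m : ℝ) (n : Λ → ℤ) : ℝ :=
  exp (-(m / 2) * (dgField β n ⬝ᵥ dgField β n))

lemma massWeight_pos (β m : ℝ) (n : Λ → ℤ) : 0 < massWeight β m n := exp_pos _

/-- The sum of `massWeight β m` over the constant configurations, `Σ_t e^{-(m/2) N c² t²}`. -/
noncomputable def zeroModeSum (Λ : Type*) [Fintype Λ] (β m : ℝ) : ℝ :=
  evenKernel 0 (2 * π * m * Fintype.card Λ / β)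

noncomputable def massRatio (β m : ℝ) (n : Λ → ℤ) : ℝ :=
  (∑' t : ℤ, massWeight β m (fun x => n x + t)) / zeroModeSum Λ β m

variable [Nonempty Λ] {β : ℝ}

lemma zeroModeSum_pos (hβ : 0 < β) {m : ℝ} (hm : 0 < m) : 0 < zeroModeSum Λ β m :=
  evenKernel_pos 0 (by positivity)

lemma hasSum_massWeight_add_const (hβ : 0 < β) {m : ℝ} (hm : 0 < m) (n : Λ → ℤ) :
    HasSum (fun t : ℤ => massWeight β m (fun x => n x + t))
      (exp (-(m / 2) *
          (dgField β n ⬝ᵥ dgField β n - (∑ x, dgField β n x) ^ 2 / Fintype.card Λ)) *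
        evenKernel (((∑ x, dgField β n x) / (2 * π / √β * Fintype.card Λ) : ℝ))
          (2 * π * m * Fintype.card Λ / β)) := by
  have hc : 2 * π / √β ≠ 0 := by positivity
  have hτ : m * Fintype.card Λ * (2 * π / √β) ^ 2 / (2 * π) =
      2 * π * m * Fintype.card Λ / β := by
    rw [div_pow, sq_sqrt hβ.le]
    field_simp
  simpa only [massWeight, dgField_add_const, hτ] using
    hasSum_exp_neg_mul_dotProduct_add_const (dgField β n) hc hm

lemma massRatio_eq (hβ : 0 < β) {m : ℝ} (hm : 0 < m) (n : Λ → ℤ) :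
    massRatio β m n =
      exp (-(m / 2) *
          (dgField β n ⬝ᵥ dgField β n - (∑ x, dgField β n x) ^ 2 / Fintype.card Λ)) *
        (evenKernel (((∑ x, dgField β n x) / (2 * π / √β * Fintype.card Λ) : ℝ))
          (2 * π * m * Fintype.card Λ / β) / zeroModeSum Λ β m) := by
  rw [massRatio, (hasSum_massWeight_add_const hβ hm n).tsum_eq, mul_div_assoc]

lemma hasSum_massWeight_fiber (hβ : 0 < β) {m : ℝ} (hm : 0 < m) (n : Λ → ℤ) :
    HasSum (fun t : ℤ => massWeight β m (fun x => n x + t))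
      (zeroModeSum Λ β m * massRatio β m n) := by
  rw [massRatio, mul_div_cancel₀ _ (zeroModeSum_pos hβ hm).ne']
  exact (hasSum_massWeight_add_const hβ hm n).summable.hasSum

lemma massRatio_nonneg (hβ : 0 < β) {m : ℝ} (hm : 0 < m) (n : Λ → ℤ) :
    0 ≤ massRatio β m n :=
  div_nonneg (tsum_nonneg fun _ => (massWeight_pos _ _ _).le) (zeroModeSum_pos hβ hm).le

lemma massRatio_le_one (hβ : 0 < β) {m : ℝ} (hm : 0 < m) (n : Λ → ℤ) :
    massRatio β m n ≤ 1 := by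
  have hexp : exp (-(m / 2) *
      (dgField β n ⬝ᵥ dgField β n - (∑ x, dgField β n x) ^ 2 / Fintype.card Λ)) ≤ 1 := by
    have := sq_sum_div_card_le_dotProduct_self (dgField β n)
    exact exp_le_one_iff.2 (by nlinarith)
  rw [massRatio_eq hβ hm]
  refine mul_le_one₀ hexp
    (div_nonneg (evenKernel_pos _ (by positivity)).le (zeroModeSum_pos hβ hm).le) ?_
  exact (div_le_one (zeroModeSum_pos hβ hm)).2 (evenKernel_le_evenKernel_zero _ _)

lemma tendsto_massRatio (hβ : 0 < β) (n : Λ → ℤ) :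
    Tendsto (fun m => massRatio β m n) (𝓝[>] 0) (𝓝 1) := by
  have hτ : Tendsto (fun m : ℝ => 2 * π * m * Fintype.card Λ / β) (𝓝[>] 0) (𝓝[>] 0) := by
    refine tendsto_nhdsWithin_iff.2 ⟨?_, ?_⟩
    · have hcont : Continuous fun m : ℝ => 2 * π * m * Fintype.card Λ / β := by fun_prop
      simpa using (hcont.tendsto 0).mono_left nhdsWithin_le_nhds
    · filter_upwards [self_mem_nhdsWithin] with m (hm : 0 < m)
      exact Set.mem_Ioi.2 (by positivity)
  set D := dgField β n ⬝ᵥ dgField β n - (∑ x, dgField β n x) ^ 2 / Fintype.card Λ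
  have hexp : Tendsto (fun m : ℝ => exp (-(m / 2) * D)) (𝓝[>] 0) (𝓝 1) := by
    have hcont : Continuous fun m : ℝ => exp (-(m / 2) * D) := by fun_prop
    simpa using (hcont.tendsto 0).mono_left nhdsWithin_le_nhds
  have h := hexp.mul ((tendsto_evenKernel_div_evenKernel_zero
    (((∑ x, dgField β n x) / (2 * π / √β * Fintype.card Λ) : ℝ))).comp hτ)
  rw [mul_one] at h
  refine h.congr' ?_
  filter_upwards [self_mem_nhdsWithin] with m (hm : 0 < m)
  rw [massRatio_eq hβ hm]
  rfl

end Lattice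

section Decomposition

variable {Λ : Type*} [Fintype Λ] (o : Λ) {β : ℝ} {G : (Λ → ℤ) → ℝ}

lemma summable_abs_mul_massWeight (hβ : 0 < β) (hG : ∀ n (t : ℤ), G (fun x => n x + t) = G n)
    (hGsum : Summable fun n : {n : Λ → ℤ // n o = 0} => |G n.1|) {m : ℝ} (hm : 0 < m) :
    Summable fun n => |G n| * massWeight β m n := by
  have : Nonempty Λ := ⟨o⟩
  set K := zeroModeSum Λ β m
  have hfiber (n : {n : Λ → ℤ // n o = 0}) : HasSum
      (fun t : ℤ => |G (addConstEquiv o (n, t))| * massWeight β m (addConstEquiv o (n, t)))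
      (|G n.1| * (K * massRatio β m n.1)) := by
    simpa only [addConstEquiv, Equiv.coe_fn_mk, hG] using
      (hasSum_massWeight_fiber hβ hm n.1).mul_left |G n.1|
  rw [← (addConstEquiv o).summable_iff]
  refine (summable_prod_of_nonneg fun p =>
    mul_nonneg (abs_nonneg _) (massWeight_pos _ _ _).le).2 ⟨fun n => (hfiber n).summable, ?_⟩
  simp only [fun n => (hfiber n).tsum_eq]
  have hK : 0 ≤ K := (zeroModeSum_pos hβ hm).le
  refine (hGsum.mul_right K).of_nonneg_of_le
    (fun n => mul_nonneg (abs_nonneg _) (mul_nonneg hK (massRatio_nonneg hβ hm _))) fun n =>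
    mul_le_mul_of_nonneg_left (mul_le_of_le_one_right hK (massRatio_le_one hβ hm _))
      (abs_nonneg _)

lemma tsum_mul_massWeight (hβ : 0 < β) (hG : ∀ n (t : ℤ), G (fun x => n x + t) = G n)
    (hGsum : Summable fun n : {n : Λ → ℤ // n o = 0} => |G n.1|) {m : ℝ} (hm : 0 < m) :
    ∑' n, G n * massWeight β m n =
      zeroModeSum Λ β m * ∑' n : {n : Λ → ℤ // n o = 0}, G n.1 * massRatio β m n.1 := by
  have : Nonempty Λ := ⟨o⟩
  have hsum : Summable fun p => G (addConstEquiv o p) * massWeight β m (addConstEquiv o p) :=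
    (addConstEquiv o).summable_iff.2 <| Summable.of_norm (f := fun n => G n * massWeight β m n) <|
      (summable_abs_mul_massWeight o hβ hG hGsum hm).congr fun n => by
        rw [Real.norm_eq_abs, abs_mul, abs_of_pos (massWeight_pos β m n)]
  rw [← (addConstEquiv o).tsum_eq, hsum.tsum_prod' hsum.prod_factor, ← tsum_mul_left]
  refine tsum_congr fun n => ?_
  simp only [addConstEquiv, Equiv.coe_fn_mk, hG]
  rw [tsum_mul_left, (hasSum_massWeight_fiber hβ hm n.1).tsum_eq]
  ring

lemma tendsto_tsum_mul_massWeight_div (hβ : 0 < β)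
    (hG : ∀ n (t : ℤ), G (fun x => n x + t) = G n)
    (hGsum : Summable fun n : {n : Λ → ℤ // n o = 0} => |G n.1|) :
    Tendsto (fun m => (∑' n, G n * massWeight β m n) / zeroModeSum Λ β m)
      (𝓝[>] 0) (𝓝 (∑' n : {n : Λ → ℤ // n o = 0}, G n.1)) := by
  have : Nonempty Λ := ⟨o⟩
  have hlim : Tendsto (fun m => ∑' n : {n : Λ → ℤ // n o = 0}, G n.1 * massRatio β m n.1)
      (𝓝[>] 0) (𝓝 (∑' n : {n : Λ → ℤ // n o = 0}, G n.1)) := by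
    refine tendsto_tsum_of_dominated_convergence hGsum (fun n => ?_) ?_
    · simpa using (tendsto_massRatio hβ n.1).const_mul (G n.1)
    · filter_upwards [self_mem_nhdsWithin] with m (hm : 0 < m) n
      rw [norm_mul, Real.norm_eq_abs, Real.norm_of_nonneg (massRatio_nonneg hβ hm _)]
      exact mul_le_of_le_one_right (abs_nonneg _) (massRatio_le_one hβ hm _)
  refine hlim.congr' ?_
  filter_upwards [self_mem_nhdsWithin] with m (hm : 0 < m)
  rw [tsum_mul_massWeight o hβ hG hGsum hm, mul_div_cancel_left₀ _ (zeroModeSum_pos hβ hm).ne']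

end Decomposition

theorem stmt17_general {Λ : Type*} [Fintype Λ] (o : Λ)
    (ΔJ : Matrix Λ Λ ℝ) (hsym : ΔJ.IsSymm)
    (hconst : ∀ t : ℝ, Matrix.mulVec ΔJ (fun _ => t) = 0)
    (β : ℝ) (hβ : 0 < β)
    (F : (Λ → ℝ) → ℝ)
    (hinv : ∀ (σ : Λ → ℝ) (t : ℤ),
      F (fun x => σ x + 2 * Real.pi / Real.sqrt β * (t : ℝ)) = F σ)
    (hsum : Summable (fun n : {n : Λ → ℤ // n o = 0} =>
      Real.exp (-(1 / 2) * quadForm ΔJ (dgField β n.1)) * |F (dgField β n.1)|))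
    (hZ : Summable (fun n : {n : Λ → ℤ // n o = 0} =>
      Real.exp (-(1 / 2) * quadForm ΔJ (dgField β n.1)))) :
    (∀ m : ℝ, 0 < m → Summable (fun n : Λ → ℤ =>
        Real.exp (-(1 / 2) * (quadForm ΔJ (dgField β n) +
          m * dotProduct (dgField β n) (dgField β n))) * |F (dgField β n)|)) ∧
    Filter.Tendsto
      (fun m : ℝ =>
        (∑' n : Λ → ℤ, Real.exp (-(1 / 2) * (quadForm ΔJ (dgField β n) +
            m * dotProduct (dgField β n) (dgField β n))) * F (dgField β n)) /
        (∑' n : Λ → ℤ, Real.exp (-(1 / 2) * (quadForm ΔJ (dgField β n) +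
            m * dotProduct (dgField β n) (dgField β n)))))
      (nhdsWithin 0 (Set.Ioi 0))
      (nhds
        ((∑' n : {n : Λ → ℤ // n o = 0},
            Real.exp (-(1 / 2) * quadForm ΔJ (dgField β n.1)) * F (dgField β n.1)) /
         (∑' n : {n : Λ → ℤ // n o = 0},
            Real.exp (-(1 / 2) * quadForm ΔJ (dgField β n.1))))) := by
  have : Nonempty Λ := ⟨o⟩
  let B : (Λ → ℤ) → ℝ := fun n => exp (-(1 / 2) * quadForm ΔJ (dgField β n))
  let G : (Λ → ℤ) → ℝ := fun n => B n * F (dgField β n)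
  have hB (n : Λ → ℤ) (t : ℤ) : B (fun x => n x + t) = B n := by
    simp only [B, dgField_add_const, quadForm_add_const hsym hconst]
  have hG (n : Λ → ℤ) (t : ℤ) : G (fun x => n x + t) = G n := by
    simp only [G, hB, dgField_add_const, hinv]
  have hBsum : Summable fun n : {n : Λ → ℤ // n o = 0} => |B n.1| :=
    hZ.congr fun n => (abs_of_pos (exp_pos _)).symm
  have hGsum : Summable fun n : {n : Λ → ℤ // n o = 0} => |G n.1| :=
    hsum.congr fun n => by rw [abs_mul, abs_of_pos (exp_pos _)]
  have hweight (m : ℝ) (n : Λ → ℤ) : exp (-(1 / 2) * (quadForm ΔJ (dgField β n) +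
      m * dgField β n ⬝ᵥ dgField β n)) = B n * massWeight β m n := by
    rw [massWeight, ← exp_add]
    ring_nf
  refine ⟨fun m hm => (summable_abs_mul_massWeight o hβ hG hGsum hm).congr fun n => ?_, ?_⟩
  · rw [hweight, abs_mul, abs_of_pos (exp_pos _)]
    ring
  have hBpos : 0 < ∑' n : {n : Λ → ℤ // n o = 0}, B n :=
    hZ.tsum_pos (fun _ => (exp_pos _).le) ⟨0, rfl⟩ (exp_pos _)
  refine ((tendsto_tsum_mul_massWeight_div o hβ hG hGsum).div
    (tendsto_tsum_mul_massWeight_div o hβ hB hBsum) hBpos.ne').congr' ?_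
  filter_upwards [self_mem_nhdsWithin] with m (hm : 0 < m)
  rw [Pi.div_apply, div_div_div_cancel_right₀ (zeroModeSum_pos hβ hm).ne']
  congr 1 <;> refine tsum_congr fun n => ?_ <;> rw [hweight]
  ring

theorem stmt17 {Λ : Type*} [Fintype Λ] [DecidableEq Λ] (o : Λ)
    (ΔJ : Matrix Λ Λ ℝ) (hsym : ΔJ.IsSymm)
    (hconst : ∀ t : ℝ, Matrix.mulVec ΔJ (fun _ => t) = 0)
    (hpos : ∀ σ : Λ → ℝ, 0 ≤ quadForm ΔJ σ)
    (β : ℝ) (hβ : 0 < β)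
    (F : (Λ → ℝ) → ℝ) (M : ℝ) (hbd : ∀ σ, |F σ| ≤ M)
    (hinv : ∀ (σ : Λ → ℝ) (t : ℤ),
      F (fun x => σ x + 2 * Real.pi / Real.sqrt β * (t : ℝ)) = F σ)
    (hsum : Summable (fun n : {n : Λ → ℤ // n o = 0} =>
      Real.exp (-(1 / 2) * quadForm ΔJ (dgField β n.1)) * |F (dgField β n.1)|))
    (hZ : Summable (fun n : {n : Λ → ℤ // n o = 0} =>
      Real.exp (-(1 / 2) * quadForm ΔJ (dgField β n.1)))) :
    (∀ m : ℝ, 0 < m → Summable (fun n : Λ → ℤ =>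
        Real.exp (-(1 / 2) * (quadForm ΔJ (dgField β n) +
          m * dotProduct (dgField β n) (dgField β n))) * |F (dgField β n)|)) ∧
    Filter.Tendsto
      (fun m : ℝ =>
        (∑' n : Λ → ℤ, Real.exp (-(1 / 2) * (quadForm ΔJ (dgField β n) +
            m * dotProduct (dgField β n) (dgField β n))) * F (dgField β n)) /
        (∑' n : Λ → ℤ, Real.exp (-(1 / 2) * (quadForm ΔJ (dgField β n) +
            m * dotProduct (dgField β n) (dgField β n)))))
      (nhdsWithin 0 (Set.Ioi 0))
      (nhds
        ((∑' n : {n : Λ → ℤ // n o = 0},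
            Real.exp (-(1 / 2) * quadForm ΔJ (dgField β n.1)) * F (dgField β n.1)) /
         (∑' n : {n : Λ → ℤ // n o = 0},
            Real.exp (-(1 / 2) * quadForm ΔJ (dgField β n.1))))) :=
  stmt17_general o ΔJ hsym hconst β hβ F hinv hsum hZ
end

section
/- Polymer counting inequality: let d = 2 and L ≥ 5. There exists η > 0 (a geometric constant) such that for every connected scale-j polymer X that is not a small set (i.e. consists of more than 4 blocks of side L^j), the number of (j+1)-blocks in its closure satisfies (1+η)|X̄|_{j+1} ≤ |X|_j, where |X|_j is the number of j-blocks of X and X̄ is the union of all (j+1)-blocks intersecting X. -/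
/-- Two scale-`j` blocks, labelled by their positions in `ℤ²`, touch (are `ℓ^∞`-adjacent)
iff their labels are distinct and differ by at most `1` in each coordinate. -/
def blockAdj (x y : ℤ × ℤ) : Prop :=
  x ≠ y ∧ max |x.1 - y.1| |x.2 - y.2| ≤ 1

/-- A polymer, given by the finite set of labels of its constituent blocks, is connected
if it is nonempty and any two of its blocks are joined by a path of touching blocks. -/
def connectedPoly (Y : Finset (ℤ × ℤ)) : Prop :=
  Y.Nonempty ∧ ∀ x ∈ Y, ∀ y ∈ Y, ∃ l : List (ℤ × ℤ),
    l.head? = some x ∧ l.getLast? = some y ∧ (∀ z ∈ l, z ∈ Y) ∧ l.Chain' blockAdj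

namespace Stmt18Aux

def Fd (d : ℤ) (x : ℤ × ℤ) : ℤ × ℤ := (Int.fdiv x.1 d, Int.fdiv x.2 d)

lemma fdiv_eq {d : ℤ} (hd : 0 < d) (a : ℤ) : a.fdiv d = a / d := Int.fdiv_eq_ediv_of_nonneg a hd.le

lemma le_fdiv_iff {d : ℤ} (hd : 0 < d) {a e : ℤ} : e ≤ a.fdiv d ↔ e * d ≤ a := by
  rw [fdiv_eq hd]; exact Int.le_ediv_iff_mul_le hd

lemma fdiv_le_iff {d : ℤ} (hd : 0 < d) {a e : ℤ} : a.fdiv d ≤ e ↔ a < (e + 1) * d := by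
  rw [fdiv_eq hd]
  constructor
  · intro h
    have := Int.ediv_lt_iff_lt_mul (a := a) (b := e + 1) hd
    omega
  · intro h
    have := (Int.ediv_lt_iff_lt_mul (a := a) (b := e + 1) hd).2 h
    omega

lemma fdiv_eq_iff {d : ℤ} (hd : 0 < d) {a c : ℤ} :
    a.fdiv d = c ↔ c * d ≤ a ∧ a < (c + 1) * d := by
  constructor
  · rintro rfl
    exact ⟨(le_fdiv_iff hd).1 le_rfl, (fdiv_le_iff hd).1 le_rfl⟩
  · rintro ⟨h1, h2⟩
    have ha := (le_fdiv_iff hd).2 h1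
    have hb := (fdiv_le_iff hd).2 h2
    omega

lemma fdiv_succ_le {d : ℤ} (hd : 0 < d) (x : ℤ) :
    x.fdiv d ≤ (x + 1).fdiv d ∧ (x + 1).fdiv d ≤ x.fdiv d + 1 := by
  constructor
  · rw [fdiv_eq hd, fdiv_eq hd]
    exact Int.ediv_le_ediv hd (by omega)
  · rw [fdiv_eq hd, fdiv_eq hd]
    have h1 : (x + 1 * d) / d = x / d + 1 := Int.add_mul_ediv_right x 1 (by omega)
    have h2 : (x + 1) / d ≤ (x + 1 * d) / d := Int.ediv_le_ediv hd (by omega)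
    omega

lemma fdiv_step {d : ℤ} (hd : 0 < d) {a b : ℤ} (h : |a - b| ≤ 1) :
    |a.fdiv d - b.fdiv d| ≤ 1 := by
  rw [abs_le] at h
  have hab : a = b - 1 ∨ a = b ∨ a = b + 1 := by omega
  rw [abs_le]
  rcases hab with rfl | rfl | rfl
  · have h := fdiv_succ_le hd (b - 1)
    have e : b - 1 + 1 = b := by ring
    rw [e] at h
    omega
  · simp
  · have h := fdiv_succ_le hd b
    omega

lemma fdiv_succ_dvd {d : ℤ} (hd : 5 ≤ d) {y : ℤ} (hne : (y + 1).fdiv d ≠ y.fdiv d) :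
    d ∣ (y + 1) := by
  have hd0 : (0:ℤ) < d := by omega
  set q := y.fdiv d with hq
  have hy := (fdiv_eq_iff hd0 (a := y) (c := q)).1 rfl
  by_cases hr : y + 1 = (q + 1) * d
  · exact ⟨q + 1, by linarith⟩
  · exfalso
    apply hne
    rw [fdiv_eq_iff hd0]
    constructor
    · linarith [hy.1]
    · have := hy.2
      omega

lemma blockAdj_symm {x y : ℤ × ℤ} (h : blockAdj x y) : blockAdj y x := by
  obtain ⟨h1, h2⟩ := h
  exact ⟨h1.symm, by rwa [abs_sub_comm y.1 x.1, abs_sub_comm y.2 x.2]⟩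

lemma blockAdj_coords {x y : ℤ × ℤ} (h : blockAdj x y) :
    |x.1 - y.1| ≤ 1 ∧ |x.2 - y.2| ≤ 1 :=
  ⟨le_trans (le_max_left _ _) h.2, le_trans (le_max_right _ _) h.2⟩

def StepOK (w : ℕ → ℤ × ℤ) : Prop := ∀ k, w (k + 1) = w k ∨ blockAdj (w k) (w (k + 1))

lemma StepOK.coord1 {w : ℕ → ℤ × ℤ} (h : StepOK w) (k : ℕ) :
    |(w (k + 1)).1 - (w k).1| ≤ 1 := by
  rcases h k with he | ha
  · rw [he]; simp
  · have := (blockAdj_coords ha).1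
    rwa [abs_sub_comm]

lemma StepOK.coord2 {w : ℕ → ℤ × ℤ} (h : StepOK w) (k : ℕ) :
    |(w (k + 1)).2 - (w k).2| ≤ 1 := by
  rcases h k with he | ha
  · rw [he]; simp
  · have := (blockAdj_coords ha).2
    rwa [abs_sub_comm]

lemma walk_iv {f : ℕ → ℤ} (hf : ∀ k, |f (k + 1) - f k| ≤ 1) {i j : ℕ} (hij : i ≤ j)
    {M : ℤ} (h1 : f i ≤ M) (h2 : M ≤ f j) : ∃ k, i ≤ k ∧ k ≤ j ∧ f k = M := by
  classical
  have hex : ∃ k, i ≤ k ∧ M ≤ f k := ⟨j, hij, h2⟩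
  obtain ⟨hit, hft⟩ := Nat.find_spec hex
  have htj : Nat.find hex ≤ j := Nat.find_min' hex ⟨hij, h2⟩
  refine ⟨Nat.find hex, hit, htj, ?_⟩
  rcases eq_or_lt_of_le hit with he | hlt
  · rw [he] at h1
    omega
  · have hmin := Nat.find_min hex (show Nat.find hex - 1 < Nat.find hex by omega)
    have hit1 : i ≤ Nat.find hex - 1 := by omega
    have hflt : f (Nat.find hex - 1) < M := by
      by_contra hcon
      exact hmin ⟨hit1, by omega⟩
    have hstep := hf (Nat.find hex - 1)
    rw [abs_le] at hstep
    have he : Nat.find hex - 1 + 1 = Nat.find hex := by omega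
    rw [he] at hstep
    omega

lemma crossW {d : ℤ} (hd : 5 ≤ d) (X : Finset (ℤ × ℤ)) (w : ℕ → ℤ × ℤ)
    (hstep : StepOK w) (hmem : ∀ k, w k ∈ X)
    (hsing : ∀ k, ∀ z ∈ X, Fd d z = Fd d (w k) → z = w k)
    (c : ℤ) {i j : ℕ} (hij : i < j)
    (hi : (w i).1.fdiv d ≤ c - 1) (hj : c + 1 ≤ (w j).1.fdiv d) : False := by
  classical
  have hd0 : (0:ℤ) < d := by omega
  set f : ℕ → ℤ := fun k => (w k).1 with hfdef
  have hstep1 : ∀ k, |f (k + 1) - f k| ≤ 1 := fun k => hstep.coord1 k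
  have hstep1' : ∀ k, f (k + 1) ≤ f k + 1 ∧ f k - 1 ≤ f (k + 1) := by
    intro k; have := hstep1 k; rw [abs_le] at this; omega
  have hfi : f i < c * d := by
    have := (fdiv_le_iff hd0).1 hi
    have e : (c - 1 + 1) = c := by ring
    rwa [e] at this
  have hfj : (c + 1) * d ≤ f j := (le_fdiv_iff hd0).1 hj
  have hex : ∃ k, i ≤ k ∧ (c + 1) * d ≤ f k := ⟨j, le_of_lt hij, hfj⟩
  obtain ⟨hit, hft⟩ := Nat.find_spec hex
  set t := Nat.find hex with htdef
  have htmin : ∀ k, i ≤ k → k < t → f k < (c + 1) * d := by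
    intro k hik hkt
    have := Nat.find_min hex hkt
    rw [not_and_or] at this
    rcases this with h | h
    · exact absurd hik h
    · omega
  have hti : i < t := by
    rcases eq_or_lt_of_le hit with he | h
    · exfalso; rw [← he] at hft; nlinarith
    · exact h
  set P : ℕ → Prop := fun k => i ≤ k ∧ f k < c * d with hPdef
  have hPi : P i := ⟨le_rfl, hfi⟩
  have hit1 : i ≤ t - 1 := by omega
  set s := Nat.findGreatest P (t - 1) with hsdef
  have hPs : P s := Nat.findGreatest_spec hit1 hPi
  have hst : s ≤ t - 1 := Nat.findGreatest_le _
  have hsmax : ∀ k, s < k → k ≤ t - 1 → c * d ≤ f k := by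
    intro k h1 h2
    have hng := Nat.findGreatest_is_greatest h1 h2
    rw [hPdef] at hng
    simp only [not_and_or, not_le, not_lt] at hng
    rcases hng with h | h
    · exfalso; omega
    · exact h
  have hwin : ∀ k, s + 1 ≤ k → k ≤ t - 1 → c * d ≤ f k ∧ f k < (c + 1) * d := by
    intro k h1 h2
    exact ⟨hsmax k (by omega) h2, htmin k (by omega) (by omega)⟩
  have hs2 : s + 2 ≤ t := by
    by_contra hcon
    have hts : t = s + 1 := by omega
    have h1 := (hstep1' s).1
    rw [← hts] at h1
    have h2 : f s < c * d := hPs.2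
    nlinarith
  have hfs1 : f (s + 1) = c * d := by
    have h1 := (hwin (s + 1) le_rfl (by omega)).1
    have h2 := (hstep1' s).1
    have h3 : f s < c * d := hPs.2
    omega
  have hft1 : f (t - 1) = (c + 1) * d - 1 := by
    have h1 := (hwin (t - 1) (by omega) le_rfl).2
    have h2 := (hstep1' (t - 1)).1
    have he : t - 1 + 1 = t := by omega
    rw [he] at h2
    omega
  have hIV : ∀ r : ℤ, 0 ≤ r → r ≤ 2 →
      ∃ k, s + 1 ≤ k ∧ k ≤ t - 1 ∧ f k = c * d + r := by
    intro r h0 h2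
    exact walk_iv hstep1 (show s + 1 ≤ t - 1 by omega)
      (by rw [hfs1]; omega) (by rw [hft1]; nlinarith)
  obtain ⟨k0, hk0a, hk0b, hk0⟩ := hIV 0 le_rfl (by norm_num)
  obtain ⟨k1, hk1a, hk1b, hk1⟩ := hIV 1 (by norm_num) (by norm_num)
  obtain ⟨k2, hk2a, hk2b, hk2⟩ := hIV 2 (by norm_num) le_rfl
  have hcol : ∀ k, s + 1 ≤ k → k ≤ t - 1 → (w k).1.fdiv d = c := by
    intro k h1 h2
    have := hwin k h1 h2
    exact (fdiv_eq_iff hd0).2 this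
  set a : ℤ := (w (s + 1)).2 with hadef
  set Q : ℤ → Prop := fun y => y = a ∨ (d ∣ (a + 1) ∧ y = a + 1) ∨ (d ∣ a ∧ y = a - 1)
    with hQdef
  have hQ : ∀ k, s + 1 ≤ k → k ≤ t - 1 → Q ((w k).2) := by
    intro k hk1
    induction k, hk1 using Nat.le_induction with
    | base => intro _; left; rfl
    | succ k hk ih =>
      intro hk2
      have ihk := ih (by omega)
      rcases hstep k with heq | hadj
      · rw [heq]; exact ihk
      · have hc1 : (w k).1.fdiv d = c := hcol k hk (by omega)
        have hc2 : (w (k + 1)).1.fdiv d = c := hcol (k + 1) (by omega) hk2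
        by_cases hrow : (w (k + 1)).2.fdiv d = (w k).2.fdiv d
        · exfalso
          have hF : Fd d (w k) = Fd d (w (k + 1)) := by
            unfold Fd
            rw [hc1, hc2, hrow]
          have := hsing (k + 1) (w k) (hmem k) hF
          exact hadj.1 this
        · have habs := (blockAdj_coords hadj).2
          rw [abs_le] at habs
          have hcases : (w (k + 1)).2 = (w k).2 + 1 ∨ (w (k + 1)).2 = (w k).2 - 1 := by
            rcases (show (w (k+1)).2 = (w k).2 ∨ (w (k + 1)).2 = (w k).2 + 1 ∨
                (w (k + 1)).2 = (w k).2 - 1 by omega) with h | h | h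
            · exact absurd (by rw [h]) hrow
            · exact Or.inl h
            · exact Or.inr h
          have hdle : (2:ℤ) ≤ d := by omega
          rcases hcases with h | h
          · have hdvd : d ∣ ((w k).2 + 1) := by
              apply fdiv_succ_dvd hd
              rw [← h]; exact hrow
            rw [hQdef] at ihk ⊢
            rcases ihk with h0 | ⟨hv, h0⟩ | ⟨hv, h0⟩
            · rw [h0] at hdvd h
              exact Or.inr (Or.inl ⟨hdvd, h⟩)
            · exfalso
              rw [h0] at hdvd
              have : d ∣ (1:ℤ) := by
                have := Int.dvd_sub hdvd hv
                simpa using this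
              have := Int.le_of_dvd one_pos this
              omega
            · rw [h0] at hdvd h
              left
              have e : a - 1 + 1 = a := by ring
              rw [e] at h
              exact h
          · have hdvd0 : d ∣ ((w k).2 - 1 + 1) := by
              apply fdiv_succ_dvd hd
              have e : (w k).2 - 1 + 1 = (w k).2 := by ring
              rw [e, ← h]
              exact fun hc => hrow hc.symm
            have hdvd : d ∣ ((w k).2) := by
              have e : (w k).2 - 1 + 1 = (w k).2 := by ring
              rwa [e] at hdvd0
            rw [hQdef] at ihk ⊢
            rcases ihk with h0 | ⟨hv, h0⟩ | ⟨hv, h0⟩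
            · rw [h0] at hdvd h
              exact Or.inr (Or.inr ⟨hdvd, h⟩)
            · rw [h0] at hdvd h
              left
              have e : a + 1 - 1 = a := by ring
              rw [e] at h
              exact h
            · exfalso
              rw [h0] at hdvd
              have : d ∣ (1:ℤ) := by
                have := Int.dvd_sub hv hdvd
                have e : a - (a - 1) = 1 := by ring
                rwa [e] at this
              have := Int.le_of_dvd one_pos this
              omega
  have hQ0 := hQ k0 hk0a hk0b
  have hQ1 := hQ k1 hk1a hk1b
  have hQ2 := hQ k2 hk2a hk2b
  have hnd : ¬ (d ∣ a ∧ d ∣ (a + 1)) := by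
    rintro ⟨u1, u2⟩
    have : d ∣ (1:ℤ) := by
      have := Int.dvd_sub u2 u1
      simpa using this
    have := Int.le_of_dvd one_pos this
    omega
  have hcontra : ∀ k k', s + 1 ≤ k → k ≤ t - 1 → s + 1 ≤ k' → k' ≤ t - 1 →
      (w k).2 = (w k').2 → f k ≠ f k' → False := by
    intro k k' a1 a2 a3 a4 h2eq hfne
    have hF : Fd d (w k) = Fd d (w k') := by
      unfold Fd
      rw [hcol k a1 a2, hcol k' a3 a4, h2eq]
    have := hsing k' (w k) (hmem k) hF
    apply hfne
    show (w k).1 = (w k').1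
    rw [this]
  have hne01 : f k0 ≠ f k1 := by rw [hk0, hk1]; intro hh; omega
  have hne02 : f k0 ≠ f k2 := by rw [hk0, hk2]; intro hh; omega
  have hne12 : f k1 ≠ f k2 := by rw [hk1, hk2]; intro hh; omega
  rw [hQdef] at hQ0 hQ1 hQ2
  have hpair : (w k0).2 = (w k1).2 ∨ (w k0).2 = (w k2).2 ∨ (w k1).2 = (w k2).2 := by
    by_cases hda : d ∣ a
    · have hda1 : ¬ d ∣ (a + 1) := fun hh => hnd ⟨hda, hh⟩
      have v0 : (w k0).2 = a ∨ (w k0).2 = a - 1 := by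
        rcases hQ0 with h | ⟨hv, h⟩ | ⟨hv, h⟩
        exacts [Or.inl h, absurd hv hda1, Or.inr h]
      have v1 : (w k1).2 = a ∨ (w k1).2 = a - 1 := by
        rcases hQ1 with h | ⟨hv, h⟩ | ⟨hv, h⟩
        exacts [Or.inl h, absurd hv hda1, Or.inr h]
      have v2 : (w k2).2 = a ∨ (w k2).2 = a - 1 := by
        rcases hQ2 with h | ⟨hv, h⟩ | ⟨hv, h⟩
        exacts [Or.inl h, absurd hv hda1, Or.inr h]
      omega
    · have v0 : (w k0).2 = a ∨ (w k0).2 = a + 1 := by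
        rcases hQ0 with h | ⟨hv, h⟩ | ⟨hv, h⟩
        exacts [Or.inl h, Or.inr h, absurd hv hda]
      have v1 : (w k1).2 = a ∨ (w k1).2 = a + 1 := by
        rcases hQ1 with h | ⟨hv, h⟩ | ⟨hv, h⟩
        exacts [Or.inl h, Or.inr h, absurd hv hda]
      have v2 : (w k2).2 = a ∨ (w k2).2 = a + 1 := by
        rcases hQ2 with h | ⟨hv, h⟩ | ⟨hv, h⟩
        exacts [Or.inl h, Or.inr h, absurd hv hda]
      omega
  rcases hpair with h | h | h
  · exact hcontra k0 k1 hk0a hk0b hk1a hk1b h hne01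
  · exact hcontra k0 k2 hk0a hk0b hk2a hk2b h hne02
  · exact hcontra k1 k2 hk1a hk1b hk2a hk2b h hne12
lemma crossW' {d : ℤ} (hd : 5 ≤ d) (X : Finset (ℤ × ℤ)) (w : ℕ → ℤ × ℤ)
    (hstep : StepOK w) (hmem : ∀ k, w k ∈ X)
    (hsing : ∀ k, ∀ z ∈ X, Fd d z = Fd d (w k) → z = w k)
    (c : ℤ) {i j : ℕ} (hij : i ≠ j)
    (hi : (w i).1.fdiv d ≤ c - 1) (hj : c + 1 ≤ (w j).1.fdiv d) : False := by
  rcases lt_or_gt_of_ne hij with h | h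
  · exact crossW hd X w hstep hmem hsing c h hi hj
  · set v : ℕ → ℤ × ℤ := fun k => w (i - min k i) with hv
    have hv_eval : ∀ k, k ≤ i → v k = w (i - k) := by
      intro k hk
      simp only [hv]
      rw [min_eq_left hk]
    have hstepv : StepOK v := by
      intro k
      by_cases hk : k < i
      · have e1 : v k = w (i - k) := hv_eval k (by omega)
        have e2 : v (k + 1) = w (i - (k + 1)) := hv_eval (k + 1) (by omega)
        have e3 : i - (k + 1) + 1 = i - k := by omega
        rcases hstep (i - (k + 1)) with he | ha
        · left
          rw [e1, e2, ← e3, he]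
        · right
          rw [e1, e2, ← e3]
          exact blockAdj_symm ha
      · left
        have e : min (k + 1) i = min k i := by omega
        simp only [hv, e]
    have hmemv : ∀ k, v k ∈ X := fun k => hmem _
    have hsingv : ∀ k, ∀ z ∈ X, Fd d z = Fd d (v k) → z = v k := fun k => hsing _
    apply crossW hd X v hstepv hmemv hsingv c (i := 0) (j := i - j)
      (show (0:ℕ) < i - j by omega)
    · rw [hv_eval 0 (by omega)]
      simpa using hi
    · rw [hv_eval (i - j) (by omega)]
      have e : i - (i - j) = j := by omega
      rw [e]
      exact hj

lemma Fd_swap (d : ℤ) (x : ℤ × ℤ) : Fd d x.swap = (Fd d x).swap := rfl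

lemma blockAdj_swap {x y : ℤ × ℤ} (h : blockAdj x y) : blockAdj x.swap y.swap := by
  obtain ⟨h1, h2⟩ := h
  constructor
  · intro hc
    exact h1 (Prod.swap_injective hc)
  · simpa [Prod.swap, max_comm] using h2

lemma crossRow' {d : ℤ} (hd : 5 ≤ d) (X : Finset (ℤ × ℤ)) (w : ℕ → ℤ × ℤ)
    (hstep : StepOK w) (hmem : ∀ k, w k ∈ X)
    (hsing : ∀ k, ∀ z ∈ X, Fd d z = Fd d (w k) → z = w k)
    (c : ℤ) {i j : ℕ} (hij : i ≠ j)
    (hi : (w i).2.fdiv d ≤ c - 1) (hj : c + 1 ≤ (w j).2.fdiv d) : False := by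
  classical
  apply crossW' hd (X.image Prod.swap) (fun k => (w k).swap) ?_ ?_ ?_ c hij hi hj
  · intro k
    rcases hstep k with he | ha
    · left; simp only []; rw [he]
    · right; exact blockAdj_swap ha
  · intro k
    exact Finset.mem_image_of_mem _ (hmem k)
  · intro k z hz hF
    obtain ⟨z0, hz0, rfl⟩ := Finset.mem_image.1 hz
    rw [Fd_swap, Fd_swap] at hF
    have hF0 : Fd d z0 = Fd d (w k) := by
      have := congrArg Prod.swap hF
      simpa using this
    rw [hsing k z0 hz0 hF0]
lemma exists_walk {X : Finset (ℤ × ℤ)} (h : connectedPoly X) {x y : ℤ × ℤ}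
    (hx : x ∈ X) (hy : y ∈ X) :
    ∃ (w : ℕ → ℤ × ℤ) (N : ℕ), StepOK w ∧ (∀ k, w k ∈ X) ∧ w 0 = x ∧ w N = y := by
  obtain ⟨l, hhead, hlast, hmem, hchain⟩ := h.2 x hx y hy
  have hne : l ≠ [] := by
    intro h0
    rw [h0] at hhead
    simp at hhead
  have hlen : 0 < l.length := List.length_pos_iff.2 hne
  refine ⟨fun k => l.getD (min k (l.length - 1)) x, l.length - 1, ?_, ?_, ?_, ?_⟩
  · intro k
    by_cases hk : k < l.length - 1
    · right
      have e1 : min k (l.length - 1) = k := by omega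
      have e2 : min (k + 1) (l.length - 1) = k + 1 := by omega
      have hR := List.isChain_iff_getElem.1 hchain k (by omega)
      simp only [e1, e2]
      rw [List.getD_eq_get _ _ ⟨_, (by omega)⟩, List.getD_eq_get _ _ ⟨_, (by omega)⟩]
      exact hR
    · left
      have e : min (k + 1) (l.length - 1) = min k (l.length - 1) := by omega
      simp only [e]
  · intro k
    apply hmem
    show l.getD (min k (l.length - 1)) x ∈ l
    rw [List.getD_eq_get _ _ ⟨_, (show min k (l.length - 1) < l.length by omega)⟩]
    exact List.get_mem _ _
  · have e : min 0 (l.length - 1) = 0 := by omega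
    simp only [e]
    rw [List.getD_eq_get _ _ ⟨_, hlen⟩]
    have h1 : l.head? = some (l.head hne) := List.head?_eq_head hne
    rw [hhead] at h1
    have h2 : l.head hne = l.get ⟨0, hlen⟩ := by
      rw [List.head_eq_getElem]
      simp [List.get_eq_getElem]
    rw [← h2]
    exact (Option.some_injective _ h1).symm 
  · have e : min (l.length - 1) (l.length - 1) = l.length - 1 := by omega
    simp only [e]
    rw [List.getD_eq_get _ _ ⟨l.length - 1, (by omega)⟩]
    have h1 : l.getLast? = some (l.getLast hne) := List.getLast?_eq_getLast hne
    rw [hlast] at h1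
    have h2 : l.getLast hne = l.get ⟨l.length - 1, by omega⟩ := List.getLast_eq_getElem hne
    rw [← h2]
    exact (Option.some_injective _ h1).symm
lemma smallcase {d : ℤ} {X : Finset (ℤ × ℤ)} {B : ℤ × ℤ}
    (hn : 4 < (X.image (Fd d)).card)
    (hnear : ∀ C ∈ X.image (Fd d), |C.1 - B.1| ≤ 1 ∧ |C.2 - B.2| ≤ 1)
    (hcols : (¬ ∃ C ∈ X.image (Fd d), C.1 = B.1 - 1) ∨
      (¬ ∃ C ∈ X.image (Fd d), C.1 = B.1 + 1))
    (hrows : (¬ ∃ C ∈ X.image (Fd d), C.2 = B.2 - 1) ∨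
      (¬ ∃ C ∈ X.image (Fd d), C.2 = B.2 + 1)) : False := by
  classical
  obtain ⟨lo, hlo⟩ : ∃ lo, ∀ C ∈ X.image (Fd d), C.1 = lo ∨ C.1 = lo + 1 := by
    rcases hcols with h | h
    · refine ⟨B.1, fun C hC => ?_⟩
      have h1 := (hnear C hC).1
      rw [abs_le] at h1
      have h2 : C.1 ≠ B.1 - 1 := fun hh => h ⟨C, hC, hh⟩
      omega
    · refine ⟨B.1 - 1, fun C hC => ?_⟩
      have h1 := (hnear C hC).1
      rw [abs_le] at h1
      have h2 : C.1 ≠ B.1 + 1 := fun hh => h ⟨C, hC, hh⟩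
      omega
  obtain ⟨mo, hmo⟩ : ∃ mo, ∀ C ∈ X.image (Fd d), C.2 = mo ∨ C.2 = mo + 1 := by
    rcases hrows with h | h
    · refine ⟨B.2, fun C hC => ?_⟩
      have h1 := (hnear C hC).2
      rw [abs_le] at h1
      have h2 : C.2 ≠ B.2 - 1 := fun hh => h ⟨C, hC, hh⟩
      omega
    · refine ⟨B.2 - 1, fun C hC => ?_⟩
      have h1 := (hnear C hC).2
      rw [abs_le] at h1
      have h2 : C.2 ≠ B.2 + 1 := fun hh => h ⟨C, hC, hh⟩
      omega
  have hsub : X.image (Fd d) ⊆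
      ({(lo, mo), (lo, mo + 1), (lo + 1, mo), (lo + 1, mo + 1)} : Finset (ℤ × ℤ)) := by
    intro C hC
    have h1 := hlo C hC
    have h2 := hmo C hC
    simp only [Finset.mem_insert, Finset.mem_singleton]
    rcases h1 with h1 | h1 <;> rcases h2 with h2 | h2
    · exact Or.inl (Prod.ext h1 h2)
    · exact Or.inr (Or.inl (Prod.ext h1 h2))
    · exact Or.inr (Or.inr (Or.inl (Prod.ext h1 h2)))
    · exact Or.inr (Or.inr (Or.inr (Prod.ext h1 h2)))
  have hcard := Finset.card_le_card hsub
  have h4 : ({(lo, mo), (lo, mo + 1), (lo + 1, mo), (lo + 1, mo + 1)} :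
      Finset (ℤ × ℤ)).card ≤ 4 := by
    apply le_trans (Finset.card_insert_le _ _)
    have := Finset.card_insert_le (lo, mo + 1)
      ({(lo + 1, mo), (lo + 1, mo + 1)} : Finset (ℤ × ℤ))
    have := Finset.card_insert_le (lo + 1, mo) ({(lo + 1, mo + 1)} : Finset (ℤ × ℤ))
    simp only [Finset.card_singleton] at *
    omega
  omega

lemma ML {d : ℤ} (hd : 5 ≤ d) {X : Finset (ℤ × ℤ)} (hconn : connectedPoly X)
    (hn : 4 < (X.image (Fd d)).card) {B : ℤ × ℤ} (hB : B ∈ X.image (Fd d))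
    (hsing : ∀ C ∈ X.image (Fd d), |C.1 - B.1| ≤ 2 → |C.2 - B.2| ≤ 2 →
      ∀ z ∈ X, ∀ z' ∈ X, Fd d z = C → Fd d z' = C → z = z') : False := by
  classical
  have hd0 : (0:ℤ) < d := by omega
  obtain ⟨p, hp, hFp⟩ := Finset.mem_image.1 hB
  by_cases hfar : ∃ C ∈ X.image (Fd d), 2 ≤ |C.1 - B.1| ∨ 2 ≤ |C.2 - B.2|
  · obtain ⟨C, hC, hCfar⟩ := hfar
    obtain ⟨q, hq, hFq⟩ := Finset.mem_image.1 hC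
    obtain ⟨w, N, hstep, hmem, hw0, hwN⟩ := exists_walk hconn hp hq
    have hexD : ∃ k, 2 ≤ |(Fd d (w k)).1 - B.1| ∨ 2 ≤ |(Fd d (w k)).2 - B.2| :=
      ⟨N, by rw [hwN, hFq]; exact hCfar⟩
    have hspec := Nat.find_spec hexD
    have hminD : ∀ k, k < Nat.find hexD →
        |(Fd d (w k)).1 - B.1| ≤ 1 ∧ |(Fd d (w k)).2 - B.2| ≤ 1 := by
      intro k hk
      have := Nat.find_min hexD hk
      rw [not_or] at this
      omega
    have ht0 : Nat.find hexD ≠ 0 := by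
      intro h0
      rw [h0, hw0, hFp] at hspec
      simp at hspec
    set t := Nat.find hexD with htdef
    have hstepcol : |(Fd d (w t)).1 - (Fd d (w (t - 1))).1| ≤ 1 := by
      have h1 := hstep.coord1 (t - 1)
      have e : t - 1 + 1 = t := by omega
      rw [e] at h1
      exact fdiv_step hd0 h1
    have hsteprow : |(Fd d (w t)).2 - (Fd d (w (t - 1))).2| ≤ 1 := by
      have h1 := hstep.coord2 (t - 1)
      have e : t - 1 + 1 = t := by omega
      rw [e] at h1
      exact fdiv_step hd0 h1
    obtain ⟨hp1, hp2⟩ := hminD (t - 1) (by omega)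
    have htb : |(Fd d (w t)).1 - B.1| ≤ 2 ∧ |(Fd d (w t)).2 - B.2| ≤ 2 := by
      rw [abs_le] at hstepcol hsteprow hp1 hp2
      constructor <;> rw [abs_le] <;> omega
    obtain ⟨ht1, ht2⟩ := htb
    set v : ℕ → ℤ × ℤ := fun k => w (min k t) with hv
    have hv_eval : ∀ k, k ≤ t → v k = w k := by
      intro k hk
      simp only [hv]
      rw [min_eq_left hk]
    have hstepv : StepOK v := by
      intro k
      by_cases hk : k < t
      · have e1 : v k = w k := hv_eval k (by omega)
        have e2 : v (k + 1) = w (k + 1) := hv_eval (k + 1) (by omega)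
        rw [e1, e2]
        exact hstep k
      · left
        have e : min (k + 1) t = min k t := by omega
        simp only [hv, e]
    have hmemv : ∀ k, v k ∈ X := fun k => hmem _
    have hBd : ∀ k, |(Fd d (v k)).1 - B.1| ≤ 2 ∧ |(Fd d (v k)).2 - B.2| ≤ 2 := by
      intro k
      by_cases hk : k < t
      · rw [hv_eval k (by omega)]
        have := hminD k hk
        omega
      · have e : min k t = t := by omega
        simp only [hv, e]
        exact ⟨ht1, ht2⟩
    have hsingv : ∀ k, ∀ z ∈ X, Fd d z = Fd d (v k) → z = v k := by
      intro k z hz hF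
      exact hsing (Fd d (v k)) (Finset.mem_image_of_mem _ (hmemv k))
        (hBd k).1 (hBd k).2 z hz (v k) (hmemv k) hF rfl
    have hvt : v t = w t := hv_eval t le_rfl
    have hv0 : v 0 = p := by rw [hv_eval 0 (by omega), hw0]
    rcases hspec with hcol | hrow
    · have hcol2 : (Fd d (w t)).1 - B.1 = 2 ∨ (Fd d (w t)).1 - B.1 = -2 := by
        rw [le_abs] at hcol
        rw [abs_le] at ht1
        omega
      rcases hcol2 with h2 | h2
      · apply crossW' hd X v hstepv hmemv hsingv (B.1 + 1) (i := 0) (j := t)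
          (show (0:ℕ) ≠ t from fun hh => ht0 hh.symm)
        · rw [hv0]
          show (Fd d p).1 ≤ B.1 + 1 - 1
          rw [hFp]
          omega
        · rw [hvt]
          show B.1 + 1 + 1 ≤ (Fd d (w t)).1
          omega
      · apply crossW' hd X v hstepv hmemv hsingv (B.1 - 1) (i := t) (j := 0)
          (show t ≠ (0:ℕ) from ht0)
        · rw [hvt]
          show (Fd d (w t)).1 ≤ B.1 - 1 - 1
          omega
        · rw [hv0]
          show B.1 - 1 + 1 ≤ (Fd d p).1
          rw [hFp]
          omega
    · have hrow2 : (Fd d (w t)).2 - B.2 = 2 ∨ (Fd d (w t)).2 - B.2 = -2 := by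
        rw [le_abs] at hrow
        rw [abs_le] at ht2
        omega
      rcases hrow2 with h2 | h2
      · apply crossRow' hd X v hstepv hmemv hsingv (B.2 + 1) (i := 0) (j := t)
          (show (0:ℕ) ≠ t from fun hh => ht0 hh.symm)
        · rw [hv0]
          show (Fd d p).2 ≤ B.2 + 1 - 1
          rw [hFp]
          omega
        · rw [hvt]
          show B.2 + 1 + 1 ≤ (Fd d (w t)).2
          omega
      · apply crossRow' hd X v hstepv hmemv hsingv (B.2 - 1) (i := t) (j := 0)
          (show t ≠ (0:ℕ) from ht0)
        · rw [hvt]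
          show (Fd d (w t)).2 ≤ B.2 - 1 - 1
          omega
        · rw [hv0]
          show B.2 - 1 + 1 ≤ (Fd d p).2
          rw [hFp]
          omega
  · push_neg at hfar
    have hnear : ∀ C ∈ X.image (Fd d), |C.1 - B.1| ≤ 1 ∧ |C.2 - B.2| ≤ 1 := by
      intro C hC
      have := hfar C hC
      omega
    have hsing1 : ∀ (ww : ℕ → ℤ × ℤ), (∀ k, ww k ∈ X) →
        ∀ k, ∀ z ∈ X, Fd d z = Fd d (ww k) → z = ww k := by
      intro ww hmemw k z hz hF
      have hCk := hnear (Fd d (ww k)) (Finset.mem_image_of_mem _ (hmemw k))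
      exact hsing (Fd d (ww k)) (Finset.mem_image_of_mem _ (hmemw k))
        (by omega) (by omega) z hz (ww k) (hmemw k) hF rfl
    by_cases h1 : ∃ C ∈ X.image (Fd d), C.1 = B.1 - 1
    · by_cases h2 : ∃ C ∈ X.image (Fd d), C.1 = B.1 + 1
      · obtain ⟨C1, hC1, hc1⟩ := h1
        obtain ⟨C2, hC2, hc2⟩ := h2
        obtain ⟨u, hu, hFu⟩ := Finset.mem_image.1 hC1
        obtain ⟨u', hu', hFu'⟩ := Finset.mem_image.1 hC2
        obtain ⟨w, N, hstep, hmem, hw0, hwN⟩ := exists_walk hconn hu hu'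
        have hN0 : (0:ℕ) ≠ N := by
          intro hh
          have huu : u = u' := by rw [← hw0, hh, hwN]
          rw [huu, hFu'] at hFu
          have := congrArg Prod.fst hFu
          omega
        apply crossW' hd X w hstep hmem (hsing1 w hmem) B.1 hN0
        · rw [hw0]
          show (Fd d u).1 ≤ B.1 - 1
          rw [hFu, hc1]
        · rw [hwN]
          show B.1 + 1 ≤ (Fd d u').1
          rw [hFu', hc2]
      · by_cases h3 : ∃ C ∈ X.image (Fd d), C.2 = B.2 - 1
        · by_cases h4 : ∃ C ∈ X.image (Fd d), C.2 = B.2 + 1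
          · obtain ⟨C1, hC1, hc1⟩ := h3
            obtain ⟨C2, hC2, hc2⟩ := h4
            obtain ⟨u, hu, hFu⟩ := Finset.mem_image.1 hC1
            obtain ⟨u', hu', hFu'⟩ := Finset.mem_image.1 hC2
            obtain ⟨w, N, hstep, hmem, hw0, hwN⟩ := exists_walk hconn hu hu'
            have hN0 : (0:ℕ) ≠ N := by
              intro hh
              have huu : u = u' := by rw [← hw0, hh, hwN]
              rw [huu, hFu'] at hFu
              have := congrArg Prod.snd hFu
              omega
            apply crossRow' hd X w hstep hmem (hsing1 w hmem) B.2 hN0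
            · rw [hw0]
              show (Fd d u).2 ≤ B.2 - 1
              rw [hFu, hc1]
            · rw [hwN]
              show B.2 + 1 ≤ (Fd d u').2
              rw [hFu', hc2]
          · exact smallcase hn hnear (Or.inr h2) (Or.inr h4)
        · exact smallcase hn hnear (Or.inr h2) (Or.inl h3)
    · by_cases h3 : ∃ C ∈ X.image (Fd d), C.2 = B.2 - 1
      · by_cases h4 : ∃ C ∈ X.image (Fd d), C.2 = B.2 + 1
        · obtain ⟨C1, hC1, hc1⟩ := h3
          obtain ⟨C2, hC2, hc2⟩ := h4
          obtain ⟨u, hu, hFu⟩ := Finset.mem_image.1 hC1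
          obtain ⟨u', hu', hFu'⟩ := Finset.mem_image.1 hC2
          obtain ⟨w, N, hstep, hmem, hw0, hwN⟩ := exists_walk hconn hu hu'
          have hN0 : (0:ℕ) ≠ N := by
            intro hh
            have huu : u = u' := by rw [← hw0, hh, hwN]
            rw [huu, hFu'] at hFu
            have := congrArg Prod.snd hFu
            omega
          apply crossRow' hd X w hstep hmem (hsing1 w hmem) B.2 hN0
          · rw [hw0]
            show (Fd d u).2 ≤ B.2 - 1
            rw [hFu, hc1]
          · rw [hwN]
            show B.2 + 1 ≤ (Fd d u').2
            rw [hFu', hc2]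
        · exact smallcase hn hnear (Or.inl h1) (Or.inr h4)
      · exact smallcase hn hnear (Or.inl h1) (Or.inl h3)
lemma main_nat {d : ℤ} (hd : 5 ≤ d) {X : Finset (ℤ × ℤ)} (hconn : connectedPoly X)
    (hcard : 4 < X.card) : 26 * (X.image (Fd d)).card ≤ 25 * X.card := by
  classical
  set n := (X.image (Fd d)).card with hn
  by_cases hn4 : n ≤ 4
  · omega
  · have hn5 : 4 < n := by omega
    set Xb := X.image (Fd d) with hXb
    set P : ℤ × ℤ → Prop := fun C => ∃ z ∈ X, ∃ z' ∈ X, Fd d z = C ∧ Fd d z' = C ∧ z ≠ z'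
      with hP
    set Multi := Xb.filter P with hM
    have hnearM : ∀ B ∈ Xb, ∃ C, C ∈ Multi ∧ |C.1 - B.1| ≤ 2 ∧ |C.2 - B.2| ≤ 2 := by
      intro B hB
      by_contra hno
      push_neg at hno
      apply ML hd hconn hn5 hB
      intro C hC hc1 hc2 z hz z' hz' hFz hFz'
      by_contra hne
      have hCM : C ∈ Multi := Finset.mem_filter.2 ⟨hC, ⟨z, hz, z', hz', hFz, hFz', hne⟩⟩
      exact absurd hc2 (by simpa [hc1] using hno C hCM)
    choose! g hg1 hg2 using hnearM
    have hcount : Xb.card ≤ 25 * Multi.card := by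
      apply Finset.card_le_mul_card_image_of_maps_to (f := g) (fun B hB => hg1 B hB) 25
      intro C _
      have hsub : (Xb.filter fun B => g B = C) ⊆
          Finset.Icc (C.1 - 2) (C.1 + 2) ×ˢ Finset.Icc (C.2 - 2) (C.2 + 2) := by
        intro B hB'
        obtain ⟨hBX, hgB⟩ := Finset.mem_filter.1 hB'
        have h2' := hg2 B hBX
        rw [hgB] at h2'
        obtain ⟨ha, hb⟩ := h2'
        rw [abs_le] at ha hb
        rw [Finset.mem_product, Finset.mem_Icc, Finset.mem_Icc]
        omega
      apply le_trans (Finset.card_le_card hsub)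
      rw [Finset.card_product, Int.card_Icc, Int.card_Icc]
      have e1 : C.1 + 2 + 1 - (C.1 - 2) = 5 := by ring
      have e2 : C.2 + 2 + 1 - (C.2 - 2) = 5 := by ring
      rw [e1, e2]
      decide
    have hfib : X.card = ∑ C ∈ Xb, (X.filter fun x => Fd d x = C).card :=
      Finset.card_eq_sum_card_fiberwise (fun x hx => Finset.mem_image_of_mem _ hx)
    have hsplit : (∑ C ∈ Multi, (X.filter fun x => Fd d x = C).card) +
        (∑ C ∈ Xb.filter (fun C => ¬ P C), (X.filter fun x => Fd d x = C).card)
        = ∑ C ∈ Xb, (X.filter fun x => Fd d x = C).card :=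
      Finset.sum_filter_add_sum_filter_not Xb P _
    have hmulti : 2 * Multi.card ≤ ∑ C ∈ Multi, (X.filter fun x => Fd d x = C).card := by
      rw [two_mul]
      calc Multi.card + Multi.card = ∑ _C ∈ Multi, 2 := by
            rw [Finset.sum_const, smul_eq_mul]
            omega
        _ ≤ _ := by
            apply Finset.sum_le_sum
            intro C hC
            obtain ⟨_, z, hz, z', hz', hFz, hFz', hne⟩ := Finset.mem_filter.1 hC
            apply Finset.one_lt_card.2
            exact ⟨z, Finset.mem_filter.2 ⟨hz, hFz⟩, z', Finset.mem_filter.2 ⟨hz', hFz'⟩, hne⟩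
    have hrest : (Xb.filter fun C => ¬ P C).card ≤
        ∑ C ∈ Xb.filter fun C => ¬ P C, (X.filter fun x => Fd d x = C).card := by
      calc (Xb.filter fun C => ¬ P C).card
          = ∑ _C ∈ Xb.filter fun C => ¬ P C, 1 := by
            rw [Finset.sum_const, smul_eq_mul]
            omega
        _ ≤ _ := by
            apply Finset.sum_le_sum
            intro C hC
            obtain ⟨hCX, _⟩ := Finset.mem_filter.1 hC
            obtain ⟨z, hz, hFz⟩ := Finset.mem_image.1 hCX
            exact Finset.card_pos.2 ⟨z, Finset.mem_filter.2 ⟨hz, hFz⟩⟩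
    have hcards : Multi.card + (Xb.filter fun C => ¬ P C).card = Xb.card :=
      Finset.card_filter_add_card_filter_not (p := P)
    omega

end Stmt18Aux

theorem stmt18 : ∃ η : ℝ, 0 < η ∧ ∀ L : ℕ, 5 ≤ L → ∀ X : Finset (ℤ × ℤ),
    connectedPoly X → 4 < X.card →
    (1 + η) * ((X.image fun x => (Int.fdiv x.1 (L : ℤ), Int.fdiv x.2 (L : ℤ))).card : ℝ)
      ≤ (X.card : ℝ) := by
  refine ⟨1 / 25, by norm_num, ?_⟩
  intro L hL X hconn hcard
  have hd : (5:ℤ) ≤ (L:ℤ) := by exact_mod_cast hL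
  have hmain := Stmt18Aux.main_nat hd hconn hcard
  have himg : (X.image fun x => (Int.fdiv x.1 (L : ℤ), Int.fdiv x.2 (L : ℤ)))
      = X.image (Stmt18Aux.Fd (L:ℤ)) := rfl
  rw [himg]
  have h1 : (26:ℝ) * ((X.image (Stmt18Aux.Fd (L:ℤ))).card : ℝ) ≤ 25 * (X.card : ℝ) := by
    exact_mod_cast hmain
  linarith
end
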